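/- arXiv:2210.11438 — 9 statements merged into one kernel-verified Lean document; each statement's English description precedes it below -/
import Mathlib

section
/- Suppose D, V : [0,∞) → ℝ are nonnegative, V is differentiable with V'(t) ≤ -c V(t)^{p-1} where c > 0 and 2 < p < 3, D(t) ≤ D(0) + ∫₀ᵗ V(s) ds, and V(0) > 0. Then D is uniformly bounded: D(t) ≤ D(0) + ∫₀^∞ (V(0)^{2-p}+(p-2)c s)^{-1/(p-2)} ds < ∞ for all t ≥ 0. -/
open Real MeasureTheory

theorem flocking_bounded_diameter
    (D V : ℝ → ℝ) (c p : ℝ)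
    (hc : 0 < c) (hp1 : 2 < p) (hp2 : p < 3)
    (hDnonneg : ∀ t, 0 ≤ t → 0 ≤ D t)
    (hVnonneg : ∀ t, 0 ≤ t → 0 ≤ V t)
    (hVdiff : Differentiable ℝ V)
    (hVode : ∀ t, 0 ≤ t → deriv V t ≤ -c * V t ^ (p - 1))
    (hD : ∀ t, 0 ≤ t → D t ≤ D 0 + ∫ s in (0:ℝ)..t, V s)
    (hV0 : 0 < V 0) :
    IntegrableOn (fun s : ℝ => (V 0 ^ (2 - p) + (p - 2) * c * s) ^ (-(1 / (p - 2))))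
      (Set.Ioi (0:ℝ)) ∧
    ∀ t, 0 ≤ t →
      D t ≤ D 0 + ∫ s in Set.Ioi (0:ℝ),
        (V 0 ^ (2 - p) + (p - 2) * c * s) ^ (-(1 / (p - 2))) := by
  set a : ℝ := V 0 ^ (2 - p) with ha_def
  set b : ℝ := (p - 2) * c with hb_def
  set q : ℝ := 1 / (p - 2) with hq_def
  have ha : 0 < a := Real.rpow_pos_of_pos hV0 _
  have hb : 0 < b := mul_pos (by linarith) hc
  have hq : 1 < q := by
    rw [hq_def]
    rw [lt_div_iff₀ (by linarith : (0:ℝ) < p - 2)]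
    linarith
  set g : ℝ → ℝ := fun s : ℝ => (a + b * s) ^ (-q) with hg_def
  have hpos : ∀ u : ℝ, 0 ≤ u → 0 < a + b * u := fun u hu =>
    add_pos_of_pos_of_nonneg ha (mul_nonneg hb.le hu)
  -- V is antitone on [0, ∞)
  have hanti : AntitoneOn V (Set.Ici 0) := by
    apply antitoneOn_of_deriv_nonpos (convex_Ici 0) hVdiff.continuous.continuousOn
      hVdiff.differentiableOn
    intro x hx
    rw [interior_Ici] at hx
    have h1 := hVode x hx.le
    have h2 : (0:ℝ) ≤ V x ^ (p - 1) := Real.rpow_nonneg (hVnonneg x hx.le) _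
    nlinarith
  -- pointwise bound
  have hbound : ∀ s, 0 ≤ s → V s ≤ g s := by
    intro s hs
    rcases eq_or_lt_of_le (hVnonneg s hs) with hVs | hVs
    · rw [← hVs]
      exact (Real.rpow_pos_of_pos (hpos s hs) _).le
    · have hVpos : ∀ u ∈ Set.Icc (0:ℝ) s, 0 < V u := fun u hu =>
        lt_of_lt_of_le hVs (hanti hu.1 hs hu.2)
      set φ : ℝ → ℝ := fun u : ℝ => V u ^ (2 - p) - b * u with hφ_def
      have hmono : MonotoneOn φ (Set.Icc 0 s) := by
        apply monotoneOn_of_deriv_nonneg (convex_Icc 0 s)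
        · exact ((hVdiff.continuous.continuousOn.rpow_const
            (fun u hu => Or.inl (hVpos u hu).ne')).sub
            (continuous_const.mul continuous_id).continuousOn)
        · intro u hu
          rw [interior_Icc] at hu
          have hu' : u ∈ Set.Icc (0:ℝ) s := ⟨hu.1.le, hu.2.le⟩
          have hd : HasDerivAt φ (deriv V u * (2 - p) * V u ^ (2 - p - 1) - b) u := by
            exact (((hVdiff u).hasDerivAt.rpow_const (Or.inl (hVpos u hu').ne')).sub
              ((hasDerivAt_id u).const_mul b)).congr_deriv (by ring)
          exact hd.differentiableAt.differentiableWithinAt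
        · intro u hu
          rw [interior_Icc] at hu
          have hu' : u ∈ Set.Icc (0:ℝ) s := ⟨hu.1.le, hu.2.le⟩
          have hVu : 0 < V u := hVpos u hu'
          have hd : HasDerivAt φ (deriv V u * (2 - p) * V u ^ (2 - p - 1) - b) u := by
            exact (((hVdiff u).hasDerivAt.rpow_const (Or.inl hVu.ne')).sub
              ((hasDerivAt_id u).const_mul b)).congr_deriv (by ring)
          rw [hd.deriv]
          have h1 := hVode u hu.1.le
          have hA : 0 < V u ^ (2 - p - 1) := Real.rpow_pos_of_pos hVu _
          have hprod : V u ^ (p - 1) * V u ^ (2 - p - 1) = 1 := by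
            rw [← Real.rpow_add hVu, show p - 1 + (2 - p - 1) = 0 by ring, Real.rpow_zero]
          nlinarith [mul_nonneg (sub_nonneg.mpr h1)
            (mul_nonneg (by linarith : (0:ℝ) ≤ p - 2) hA.le)]
      have hkey : a + b * s ≤ V s ^ (2 - p) := by
        have := hmono (Set.left_mem_Icc.mpr hs) (Set.right_mem_Icc.mpr hs) hs
        simp only [hφ_def, mul_zero, sub_zero] at this
        linarith
      have hexp : (2 - p) * (-q) = 1 := by
        have hne : p - (2:ℝ) ≠ 0 := by linarith
        rw [hq_def]
        field_simp
        ring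
      calc V s = V s ^ ((2 - p) * (-q)) := by rw [hexp, Real.rpow_one]
        _ = (V s ^ (2 - p)) ^ (-q) := Real.rpow_mul (hVnonneg s hs) _ _
        _ ≤ (a + b * s) ^ (-q) :=
            Real.rpow_le_rpow_of_nonpos (hpos s hs) hkey (by linarith)
  -- integrability
  have hgcont : ∀ T : Set ℝ, T ⊆ Set.Ici 0 → ContinuousOn g T := by
    intro T hT
    exact ((continuous_const.add (continuous_const.mul continuous_id)).continuousOn).rpow_const
      (fun u hu => Or.inl (hpos u (hT hu)).ne')
  have hInt : IntegrableOn g (Set.Ioi 0) := by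
    have hunion : Set.Ioc (0:ℝ) 1 ∪ Set.Ioi 1 = Set.Ioi 0 :=
      Set.Ioc_union_Ioi_eq_Ioi zero_le_one
    rw [← hunion]
    apply IntegrableOn.union
    · exact ((hgcont (Set.Icc 0 1) Set.Icc_subset_Ici_self).integrableOn_Icc).mono_set
        Set.Ioc_subset_Icc_self
    · have h1 : IntegrableOn (fun s : ℝ => b ^ (-q) * s ^ (-q)) (Set.Ioi 1) :=
        (integrableOn_Ioi_rpow_of_lt (by linarith : -q < -1) one_pos).const_mul _
      apply Integrable.mono' h1
      · exact (hgcont (Set.Ioi 1) (fun u hu => Set.mem_Ici.mpr (le_of_lt (lt_trans one_pos (Set.mem_Ioi.mp hu))))).aestronglyMeasurable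
          measurableSet_Ioi
      · filter_upwards [ae_restrict_mem measurableSet_Ioi] with s hs
        have hs1 : (1:ℝ) < s := hs
        have hbs : 0 < b * s := mul_pos hb (by linarith)
        have : g s ≤ (b * s) ^ (-q) :=
          Real.rpow_le_rpow_of_nonpos hbs (by linarith) (by linarith)
        rw [Real.norm_of_nonneg (Real.rpow_nonneg (hpos s (by linarith)).le _)]
        calc g s ≤ (b * s) ^ (-q) := this
          _ = b ^ (-q) * s ^ (-q) := Real.mul_rpow hb.le (by linarith)
  refine ⟨hInt, ?_⟩
  intro t ht
  have hVint : IntervalIntegrable V volume 0 t :=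
    hVdiff.continuous.intervalIntegrable 0 t
  have hgint : IntervalIntegrable g volume 0 t := by
    rw [intervalIntegrable_iff_integrableOn_Ioc_of_le ht]
    exact hInt.mono_set Set.Ioc_subset_Ioi_self
  calc D t ≤ D 0 + ∫ s in (0:ℝ)..t, V s := hD t ht
    _ ≤ D 0 + ∫ s in (0:ℝ)..t, g s := by
        apply add_le_add (le_refl _)
        exact intervalIntegral.integral_mono_on ht hVint hgint (fun s hs => hbound s hs.1)
    _ ≤ D 0 + ∫ s in Set.Ioi (0:ℝ), g s := by
        apply add_le_add (le_refl _)
        rw [intervalIntegral.integral_of_le ht]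
        apply setIntegral_mono_set hInt
        · filter_upwards [ae_restrict_mem measurableSet_Ioi] with s hs
          exact Real.rpow_nonneg (hpos s (le_of_lt hs)).le _
        · exact (HasSubset.Subset.eventuallyLE Set.Ioc_subset_Ioi_self)
end

section
/- Let 2 ≤ p < 3, C > 0, and let φ : [0,∞) → (0,∞) be continuous. Suppose D, V : [0,∞) → ℝ are nonnegative and differentiable with D'(t) ≤ V(t) and V'(t) ≤ -C φ(D(t)) V(t)^{p-1}. Then the Lyapunov functional E(t) = V(t)^{3-p} + (3-p) C ∫_{D(0)}^{D(t)} φ(r) dr is nonincreasing in t. -/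
open Real

theorem lyapunov_monotone
    (D V : ℝ → ℝ) (φ : ℝ → ℝ) (C p : ℝ)
    (hp1 : 2 ≤ p) (hp2 : p < 3) (hC : 0 < C)
    (hφcont : Continuous φ) (hφpos : ∀ r, 0 ≤ r → 0 < φ r)
    (hDnonneg : ∀ t, 0 ≤ t → 0 ≤ D t)
    (hVnonneg : ∀ t, 0 ≤ t → 0 ≤ V t)
    (hDdiff : Differentiable ℝ D)
    (hVdiff : Differentiable ℝ V)
    (hDode : ∀ t, 0 ≤ t → deriv D t ≤ V t)
    (hVode : ∀ t, 0 ≤ t → deriv V t ≤ -C * φ (D t) * V t ^ (p - 1)) :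
    ∀ s t, 0 ≤ s → s ≤ t →
      V t ^ (3 - p) + (3 - p) * C * (∫ r in (D 0)..(D t), φ r) ≤
      V s ^ (3 - p) + (3 - p) * C * (∫ r in (D 0)..(D s), φ r) := by
  have hq : (0:ℝ) < 3 - p := by linarith
  set q : ℝ := 3 - p with hq_def
  set F : ℝ → ℝ := fun x => ∫ r in (D 0)..x, φ r with hF_def
  have hF : ∀ x, HasDerivAt F (φ x) x := fun x =>
    intervalIntegral.integral_hasDerivAt_right (hφcont.intervalIntegrable _ _)
      hφcont.aestronglyMeasurable.stronglyMeasurableAtFilter hφcont.continuousAt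
  have hFdiff : Differentiable ℝ F := fun x => (hF x).differentiableAt
  set E : ℝ → ℝ := fun u => V u ^ q + q * C * F (D u) with hE_def
  have hEcont : Continuous E := by
    have h1 : Continuous fun u => V u ^ q :=
      hVdiff.continuous.rpow_const (fun x => Or.inr hq.le)
    exact h1.add (continuous_const.mul (hFdiff.continuous.comp hDdiff.continuous))
  -- V is antitone on [0, ∞)
  have hVanti : ∀ a b, 0 ≤ a → a ≤ b → V b ≤ V a := by
    have h := antitoneOn_of_deriv_nonpos (convex_Ici 0) hVdiff.continuous.continuousOn
      (fun x _ => (hVdiff x).differentiableWithinAt) ?_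
    · intro a b ha hab
      exact h (Set.mem_Ici.mpr ha) (Set.mem_Ici.mpr (ha.trans hab)) hab
    · intro x hx
      rw [interior_Ici] at hx
      have hx0 : (0:ℝ) ≤ x := le_of_lt hx
      have h1 : 0 ≤ C * φ (D x) * V x ^ (p - 1) :=
        mul_nonneg (mul_nonneg hC.le (hφpos _ (hDnonneg x hx0)).le)
          (Real.rpow_nonneg (hVnonneg x hx0) _)
      have := hVode x hx0
      linarith
  -- Lemma B : monotonicity of E on intervals where V is positive before the endpoint
  have lemB : ∀ a b, 0 ≤ a → a ≤ b → (∀ u, a ≤ u → u < b → 0 < V u) → E b ≤ E a := by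
    intro a b ha hab hpos
    have hder : ∀ u ∈ Set.Ioo a b,
        HasDerivAt E (deriv V u * q * V u ^ (q - 1) + q * C * (φ (D u) * deriv D u)) u := by
      intro u hu
      have hVu : V u ≠ 0 := (hpos u hu.1.le hu.2).ne'
      have h1 : HasDerivAt (fun x => V x ^ q) (deriv V u * q * V u ^ (q - 1)) u :=
        (hVdiff u).hasDerivAt.rpow_const (Or.inl hVu)
      have h2 : HasDerivAt (fun x => F (D x)) (φ (D u) * deriv D u) u :=
        (hF (D u)).comp u (hDdiff u).hasDerivAt
      exact h1.add (h2.const_mul (q * C))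
    have hA : AntitoneOn E (Set.Icc a b) := by
      apply antitoneOn_of_deriv_nonpos (convex_Icc a b) hEcont.continuousOn
      · intro u hu
        rw [interior_Icc] at hu
        exact (hder u hu).differentiableAt.differentiableWithinAt
      · intro u hu
        rw [interior_Icc] at hu
        rw [(hder u hu).deriv]
        have hu0 : 0 ≤ u := ha.trans hu.1.le
        have hVu : 0 < V u := hpos u hu.1.le hu.2
        have hφu : 0 < φ (D u) := hφpos _ (hDnonneg u hu0)
        have h1 : deriv V u * q * V u ^ (q - 1) ≤
            (-C * φ (D u) * V u ^ (p - 1)) * q * V u ^ (q - 1) := by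
          apply mul_le_mul_of_nonneg_right _ (Real.rpow_nonneg hVu.le _)
          exact mul_le_mul_of_nonneg_right (hVode u hu0) hq.le
        have h2 : q * C * (φ (D u) * deriv D u) ≤ q * C * (φ (D u) * V u) :=
          mul_le_mul_of_nonneg_left
            (mul_le_mul_of_nonneg_left (hDode u hu0) hφu.le)
            (mul_nonneg hq.le hC.le)
        have hkey : V u ^ (q - 1) * V u ^ (p - 1) = V u := by
          rw [← Real.rpow_add hVu]
          have h3 : q - 1 + (p - 1) = 1 := by rw [hq_def]; ring
          rw [h3, Real.rpow_one]
        have hz : (-C * φ (D u) * V u ^ (p - 1)) * q * V u ^ (q - 1) +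
            q * C * (φ (D u) * V u) = 0 := by
          linear_combination (-(q * C * φ (D u))) * hkey
        linarith
    exact hA (Set.left_mem_Icc.mpr hab) (Set.right_mem_Icc.mpr hab) hab
  -- Lemma C : once V vanishes, it stays zero and E is nonincreasing
  have lemC : ∀ a b, 0 ≤ a → a ≤ b → V a = 0 → E b ≤ E a := by
    intro a b ha hab hVa
    have hVzero : ∀ u, a ≤ u → V u = 0 := fun u hu =>
      le_antisymm (hVa ▸ hVanti a u ha hu) (hVnonneg u (ha.trans hu))
    have hDanti : D b ≤ D a := by
      have h := antitoneOn_of_deriv_nonpos (convex_Icc a b) hDdiff.continuous.continuousOn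
        (fun x _ => (hDdiff x).differentiableWithinAt) ?_
      · exact h (Set.left_mem_Icc.mpr hab) (Set.right_mem_Icc.mpr hab) hab
      · intro x hx
        rw [interior_Icc] at hx
        have := hDode x (ha.trans hx.1.le)
        rw [hVzero x hx.1.le] at this
        exact this
    have hFmono : F (D b) ≤ F (D a) := by
      have h := monotoneOn_of_deriv_nonneg (convex_Ici 0) hFdiff.continuous.continuousOn
        (fun x _ => (hFdiff x).differentiableWithinAt) ?_
      · exact h (Set.mem_Ici.mpr (hDnonneg b (ha.trans hab))) (Set.mem_Ici.mpr (hDnonneg a ha))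
          hDanti
      · intro x hx
        rw [interior_Ici] at hx
        rw [(hF x).deriv]
        exact (hφpos x hx.le).le
    have hVb : V b = 0 := hVzero b hab
    have hmul : q * C * F (D b) ≤ q * C * F (D a) :=
      mul_le_mul_of_nonneg_left hFmono (mul_nonneg hq.le hC.le)
    simp only [hE_def, hVa, hVb, Real.zero_rpow hq.ne']
    linarith
  -- main argument
  intro s t hs hst
  show E t ≤ E s
  by_cases hex : ∃ u, u ∈ Set.Icc s t ∧ V u = 0
  · obtain ⟨u, hu⟩ := hex
    set S : Set ℝ := {u | u ∈ Set.Icc s t ∧ V u = 0} with hS_def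
    have hSne : S.Nonempty := ⟨u, hu⟩
    have hSbdd : BddBelow S := ⟨s, fun x hx => hx.1.1⟩
    have hSclosed : IsClosed S := by
      have hEq : S = Set.Icc s t ∩ V ⁻¹' {0} := by
        ext x; simp [hS_def, Set.mem_Icc]
      rw [hEq]
      exact isClosed_Icc.inter (isClosed_singleton.preimage hVdiff.continuous)
    have hmem : sInf S ∈ S := hSclosed.csInf_mem hSne hSbdd
    set u0 := sInf S with hu0_def
    have hsu0 : s ≤ u0 := hmem.1.1
    have hu0t : u0 ≤ t := hmem.1.2
    have h1 : E t ≤ E u0 := lemC u0 t (hs.trans hsu0) hu0t hmem.2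
    have h2 : E u0 ≤ E s := by
      apply lemB s u0 hs hsu0
      intro v hv1 hv2
      rcases (hVnonneg v (hs.trans hv1)).lt_or_eq with h | h
      · exact h
      · exfalso
        have hvS : v ∈ S := ⟨⟨hv1, hv2.le.trans hu0t⟩, h.symm⟩
        exact absurd (csInf_le hSbdd hvS) (not_le.mpr hv2)
    exact h1.trans h2
  · apply lemB s t hs hst
    intro v hv1 hv2
    rcases (hVnonneg v (hs.trans hv1)).lt_or_eq with h | h
    · exact h
    · exact absurd ⟨⟨hv1, hv2.le⟩, h.symm⟩ (fun hx => hex ⟨v, hx⟩)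
end

section
/- Let 2 ≤ p < 3, 0 ≤ α < 1, λ, C > 0, and suppose D, V : [0,∞) → ℝ≥0 satisfy D'(t) ≤ V(t) and V'(t) ≤ -λ C D(t)^{-α} V(t)^{p-1}. Then for all t ≥ 0, D(t) ≤ ( D(0)^{1-α} + (1-α)/((3-p)λC) · V(0)^{3-p} )^{1/(1-α)}. In particular flocking holds unconditionally for fat-tail communication. -/
open Real

theorem unconditional_flocking_fat_tail
    (D V : ℝ → ℝ) (p α lam C : ℝ)
    (hp1 : 2 ≤ p) (hp2 : p < 3) (hα1 : 0 ≤ α) (hα2 : α < 1)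
    (hlam : 0 < lam) (hC : 0 < C)
    (hDnonneg : ∀ t, 0 ≤ t → 0 ≤ D t)
    (hVnonneg : ∀ t, 0 ≤ t → 0 ≤ V t)
    (hDdiff : Differentiable ℝ D)
    (hVdiff : Differentiable ℝ V)
    (hDode : ∀ t, 0 ≤ t → deriv D t ≤ V t)
    (hVode : ∀ t, 0 ≤ t → deriv V t ≤ -lam * C * D t ^ (-α) * V t ^ (p - 1)) :
    ∀ t, 0 ≤ t →
      D t ≤ (D 0 ^ (1 - α) + (1 - α) / ((3 - p) * lam * C) * V 0 ^ (3 - p))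
        ^ (1 / (1 - α)) := by
  intro t1 ht1
  set c : ℝ := (1 - α) / ((3 - p) * lam * C) with hc
  have h3p : 0 < 3 - p := by linarith
  have h1α : 0 < 1 - α := by linarith
  have hlC : 0 < (3 - p) * lam * C := by positivity
  have hcpos : 0 < c := div_pos h1α hlC
  -- V is antitone on [0, ∞)
  have hVanti : AntitoneOn V (Set.Ici (0 : ℝ)) := by
    apply antitoneOn_of_deriv_nonpos (convex_Ici 0) hVdiff.continuous.continuousOn
      hVdiff.differentiableOn
    intro x hx
    rw [interior_Ici] at hx
    have hx0 : (0 : ℝ) ≤ x := hx.le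
    have h1 : (0 : ℝ) ≤ D x ^ (-α) := Real.rpow_nonneg (hDnonneg x hx0) _
    have h2 : (0 : ℝ) ≤ V x ^ (p - 1) := Real.rpow_nonneg (hVnonneg x hx0) _
    have := hVode x hx0
    nlinarith [mul_nonneg h1 h2, mul_pos hlam hC]
  set E : ℝ → ℝ := fun t => c * V t ^ (3 - p) + D t ^ (1 - α) with hE
  have hEcont : Continuous E := by
    apply Continuous.add
    · exact continuous_const.mul
        (hVdiff.continuous.rpow_const (fun x => Or.inr h3p.le))
    · exact hDdiff.continuous.rpow_const (fun x => Or.inr h1α.le)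
  -- key monotonicity of the Lyapunov functional
  have key : ∀ a b : ℝ, 0 ≤ a → a < b →
      (∀ x, a < x → x < b → 0 < D x ∧ 0 < V x) →
      c * V b ^ (3 - p) + D b ^ (1 - α) ≤ c * V a ^ (3 - p) + D a ^ (1 - α) := by
    intro a b ha hab h
    have hderiv : ∀ x, a < x → x < b →
        HasDerivAt E (c * (deriv V x * (3 - p) * V x ^ (3 - p - 1))
          + deriv D x * (1 - α) * D x ^ (1 - α - 1)) x := by
      intro x h1 h2
      obtain ⟨hDx, hVx⟩ := h x h1 h2
      exact (((hVdiff x).hasDerivAt.rpow_const (Or.inl hVx.ne')).const_mul c).add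
        ((hDdiff x).hasDerivAt.rpow_const (Or.inl hDx.ne'))
    have hanti : AntitoneOn E (Set.Icc a b) := by
      apply antitoneOn_of_deriv_nonpos (convex_Icc a b) hEcont.continuousOn
      · rw [interior_Icc]
        intro x hx
        exact (hderiv x hx.1 hx.2).differentiableAt.differentiableWithinAt
      · rw [interior_Icc]
        intro x hx
        obtain ⟨hDx, hVx⟩ := h x hx.1 hx.2
        have hx0 : (0 : ℝ) ≤ x := le_trans ha hx.1.le
        rw [(hderiv x hx.1 hx.2).deriv]
        have e1 : deriv V x ≤ -lam * C * D x ^ (-α) * V x ^ (p - 1) := hVode x hx0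
        have e2 : deriv D x ≤ V x := hDode x hx0
        have hexp1 : (3 : ℝ) - p - 1 = 2 - p := by ring
        have hexp2 : (1 : ℝ) - α - 1 = -α := by ring
        rw [hexp1, hexp2]
        have hB : (0 : ℝ) ≤ D x ^ (-α) := Real.rpow_nonneg hDx.le _
        have hW2 : (0 : ℝ) ≤ V x ^ (2 - p) := Real.rpow_nonneg hVx.le _
        have hprod : V x ^ (2 - p) * V x ^ (p - 1) = V x := by
          rw [← Real.rpow_add hVx]
          norm_num
        have hcc : c * (3 - p) * (lam * C) = 1 - α := by
          rw [hc, mul_assoc, ← mul_assoc (3 - p)]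
          exact div_mul_cancel₀ _ hlC.ne'
        -- first term bound
        have t1b : c * (deriv V x * (3 - p) * V x ^ (2 - p))
            ≤ -((1 - α) * D x ^ (-α) * V x) := by
          have hfac : (0 : ℝ) ≤ c * ((3 - p) * V x ^ (2 - p)) := by positivity
          calc c * (deriv V x * (3 - p) * V x ^ (2 - p))
              = c * ((3 - p) * V x ^ (2 - p)) * deriv V x := by ring
            _ ≤ c * ((3 - p) * V x ^ (2 - p)) *
                  (-lam * C * D x ^ (-α) * V x ^ (p - 1)) := by
                  exact mul_le_mul_of_nonneg_left e1 hfac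
            _ = -((c * (3 - p) * (lam * C)) * D x ^ (-α) *
                  (V x ^ (2 - p) * V x ^ (p - 1))) := by ring
            _ = -((1 - α) * D x ^ (-α) * V x) := by rw [hcc, hprod]
        have t2b : deriv D x * (1 - α) * D x ^ (-α) ≤ (1 - α) * D x ^ (-α) * V x := by
          have hfac : (0 : ℝ) ≤ (1 - α) * D x ^ (-α) := by positivity
          calc deriv D x * (1 - α) * D x ^ (-α)
              = (1 - α) * D x ^ (-α) * deriv D x := by ring
            _ ≤ (1 - α) * D x ^ (-α) * V x := mul_le_mul_of_nonneg_left e2 hfac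
        linarith
    have := hanti (Set.left_mem_Icc.mpr hab.le) (Set.right_mem_Icc.mpr hab.le) hab.le
    simpa [hE] using this
  -- main estimate with epsilon
  have main : ∀ ε : ℝ, 0 < ε →
      D t1 ^ (1 - α) ≤ (D 0 + ε) ^ (1 - α) + c * V 0 ^ (3 - p) := by
    intro ε hε
    have hV0nn : 0 ≤ V 0 := hVnonneg 0 le_rfl
    have hcV : 0 ≤ c * V 0 ^ (3 - p) := by positivity
    by_cases hcase : D t1 ≤ D 0 + ε
    · have h := Real.rpow_le_rpow (hDnonneg t1 ht1) hcase h1α.le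
      linarith
    · push_neg at hcase
      set S : Set ℝ := {t | t ∈ Set.Icc 0 t1 ∧ D t ≤ D 0 + ε} with hSdef
      have hS0 : (0 : ℝ) ∈ S := ⟨⟨le_rfl, ht1⟩, by linarith⟩
      have hSbdd : BddAbove S := ⟨t1, fun x hx => hx.1.2⟩
      have hSclosed : IsClosed S := by
        have : S = Set.Icc 0 t1 ∩ {t | D t ≤ D 0 + ε} := rfl
        rw [this]
        exact isClosed_Icc.inter (isClosed_le hDdiff.continuous continuous_const)
      set s := sSup S with hsdef
      have hsmem : s ∈ S := hSclosed.csSup_mem ⟨0, hS0⟩ hSbdd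
      have hs0 : 0 ≤ s := hsmem.1.1
      have hst1 : s ≤ t1 := hsmem.1.2
      have hslt : s < t1 := by
        rcases lt_or_eq_of_le hst1 with h | h
        · exact h
        · exfalso; rw [h] at hsmem; exact absurd hsmem.2 (not_le.mpr hcase)
      have hDs : D s ≤ D 0 + ε := hsmem.2
      have hDbig : ∀ x, s < x → x ≤ t1 → D 0 + ε < D x := by
        intro x hsx hxt1
        by_contra hcon
        push_neg at hcon
        have hxS : x ∈ S := ⟨⟨le_trans hs0 hsx.le, hxt1⟩, hcon⟩
        exact absurd (le_csSup hSbdd hxS) (not_le.mpr hsx)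
      have hDpos : ∀ x, s < x → x ≤ t1 → 0 < D x := by
        intro x h1 h2
        have := hDbig x h1 h2
        have := hDnonneg 0 le_rfl
        linarith
      have hEs : c * V s ^ (3 - p) + D s ^ (1 - α)
          ≤ (D 0 + ε) ^ (1 - α) + c * V 0 ^ (3 - p) := by
        have h1 : D s ^ (1 - α) ≤ (D 0 + ε) ^ (1 - α) :=
          Real.rpow_le_rpow (hDnonneg s hs0) hDs h1α.le
        have hVs : V s ≤ V 0 := hVanti Set.self_mem_Ici hs0 hs0
        have h2 : V s ^ (3 - p) ≤ V 0 ^ (3 - p) :=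
          Real.rpow_le_rpow (hVnonneg s hs0) hVs h3p.le
        have h3 := mul_le_mul_of_nonneg_left h2 hcpos.le
        linarith
      suffices h : D t1 ^ (1 - α) ≤ c * V s ^ (3 - p) + D s ^ (1 - α) by linarith
      by_cases hV1 : 0 < V t1
      · have hVpos : ∀ x, 0 ≤ x → x ≤ t1 → 0 < V x := fun x hx hxt =>
          lt_of_lt_of_le hV1 (hVanti hx ht1 hxt)
        have hEle := key s t1 hs0 hslt (fun x h1 h2 =>
          ⟨hDpos x h1 h2.le, hVpos x (le_trans hs0 h1.le) h2.le⟩)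
        have hcV1 : 0 ≤ c * V t1 ^ (3 - p) := by
          have := hVnonneg t1 ht1; positivity
        linarith
      · have hVt1 : V t1 = 0 := le_antisymm (not_lt.mp hV1) (hVnonneg t1 ht1)
        set T : Set ℝ := {t | t ∈ Set.Icc s t1 ∧ V t = 0} with hTdef
        have hT1 : t1 ∈ T := ⟨⟨hst1, le_rfl⟩, hVt1⟩
        have hTclosed : IsClosed T := by
          have : T = Set.Icc s t1 ∩ {t | V t = 0} := rfl
          rw [this]
          exact isClosed_Icc.inter (isClosed_eq hVdiff.continuous continuous_const)
        have hTbdd : BddBelow T := ⟨s, fun x hx => hx.1.1⟩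
        set ts := sInf T with htsdef
        have htsmem : ts ∈ T := hTclosed.csInf_mem ⟨t1, hT1⟩ hTbdd
        have hsts : s ≤ ts := htsmem.1.1
        have htst1 : ts ≤ t1 := htsmem.1.2
        have hts0 : 0 ≤ ts := le_trans hs0 hsts
        have hVts : V ts = 0 := htsmem.2
        have hVposlt : ∀ x, s ≤ x → x < ts → 0 < V x := by
          intro x h1 h2
          rcases (hVnonneg x (le_trans hs0 h1)).lt_or_eq with h | h
          · exact h
          · exfalso
            have hxT : x ∈ T := ⟨⟨h1, le_trans h2.le htst1⟩, h.symm⟩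
            exact absurd (csInf_le hTbdd hxT) (not_le.mpr h2)
        have hVzero : ∀ x, ts ≤ x → x ≤ t1 → V x = 0 := by
          intro x h1 h2
          have hx0 : 0 ≤ x := le_trans hts0 h1
          have := hVanti (Set.mem_Ici.mpr hts0) (Set.mem_Ici.mpr hx0) h1
          have := hVnonneg x hx0
          linarith [hVts ▸ ‹V x ≤ V ts›]
        have hDanti : AntitoneOn D (Set.Icc ts t1) := by
          apply antitoneOn_of_deriv_nonpos (convex_Icc _ _)
            hDdiff.continuous.continuousOn hDdiff.differentiableOn
          intro x hx
          rw [interior_Icc] at hx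
          have hx0 : 0 ≤ x := le_trans hts0 hx.1.le
          have := hDode x hx0
          rw [hVzero x hx.1.le hx.2.le] at this
          exact this
        have hd1 : D t1 ≤ D ts :=
          hDanti (Set.left_mem_Icc.mpr htst1) (Set.right_mem_Icc.mpr htst1) htst1
        have hd1' : D t1 ^ (1 - α) ≤ D ts ^ (1 - α) :=
          Real.rpow_le_rpow (hDnonneg t1 ht1) hd1 h1α.le
        rcases eq_or_lt_of_le hsts with heq | hlt
        · -- ts = s
          have hVsnn : 0 ≤ V s := hVnonneg s hs0
          have h4 : 0 ≤ c * V s ^ (3 - p) := by positivity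
          rw [← heq] at hd1'
          linarith
        · have hEle := key s ts hs0 hlt (fun x h1 h2 =>
            ⟨hDpos x h1 (le_trans h2.le htst1), hVposlt x h1.le h2⟩)
          have hVtsnn : 0 ≤ V ts := hVnonneg ts hts0
          have h4 : 0 ≤ c * V ts ^ (3 - p) := by positivity
          linarith
  -- pass to the limit ε → 0⁺
  have hlim : D t1 ^ (1 - α) ≤ D 0 ^ (1 - α) + c * V 0 ^ (3 - p) := by
    have hcont : ContinuousAt (fun ε : ℝ => (D 0 + ε) ^ (1 - α) + c * V 0 ^ (3 - p)) 0 := by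
      apply ContinuousAt.add _ continuousAt_const
      have h1 : ContinuousAt (fun x : ℝ => x ^ (1 - α)) (D 0 + 0) :=
        Real.continuousAt_rpow_const _ _ (Or.inr h1α.le)
      exact h1.comp (continuousAt_const.add continuousAt_id)
    have htend : Filter.Tendsto (fun ε : ℝ => (D 0 + ε) ^ (1 - α) + c * V 0 ^ (3 - p))
        (nhdsWithin 0 (Set.Ioi 0)) (nhds (D 0 ^ (1 - α) + c * V 0 ^ (3 - p))) := by
      have h := hcont.tendsto.mono_left
        (nhdsWithin_le_nhds (s := Set.Ioi (0 : ℝ)))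
      simpa using h
    refine ge_of_tendsto htend ?_
    filter_upwards [self_mem_nhdsWithin] with ε hε
    exact main ε hε
  -- conclude
  have hKnn : 0 ≤ D 0 ^ (1 - α) + c * V 0 ^ (3 - p) := by
    have h1 : 0 ≤ D 0 ^ (1 - α) := Real.rpow_nonneg (hDnonneg 0 le_rfl) _
    have h2 : 0 ≤ V 0 := hVnonneg 0 le_rfl
    positivity
  calc D t1 = (D t1 ^ (1 - α)) ^ (1 - α)⁻¹ :=
        (Real.rpow_rpow_inv (hDnonneg t1 ht1) h1α.ne').symm
    _ ≤ (D 0 ^ (1 - α) + c * V 0 ^ (3 - p)) ^ (1 - α)⁻¹ :=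
        Real.rpow_le_rpow (Real.rpow_nonneg (hDnonneg t1 ht1) _) hlim
          (inv_nonneg.mpr h1α.le)
    _ = (D 0 ^ (1 - α) + c * V 0 ^ (3 - p)) ^ (1 / (1 - α)) := by rw [one_div]
end

section
/- Let p > 3, 0 ≤ α < 1, λ, C > 0, and let D, V : [0,∞) → ℝ≥0 satisfy D'(t) ≤ V(t), V'(t) ≤ -λC D(t)^{-α} V(t)^{p-1}, with D(0), V(0) > 0 bounded. Then there exist constants K₁, K₂ (depending on D(0), V(0), p, α, λ, C) such that D(t) ≤ K₁ (t+1)^{1 - (1-α)/(p-2-α)} and V(t) ≤ K₂ (t+1)^{-(1-α)/(p-2-α)} for all t ≥ 0. -/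
open Real Set Filter

private lemma le_of_hasDerivAt_nonneg {f : ℝ → ℝ} {a b : ℝ} (hab : a ≤ b)
    (h : ∀ t ∈ Set.Icc a b, ∃ f', HasDerivAt f f' t ∧ 0 ≤ f') : f a ≤ f b := by
  have hmono : MonotoneOn f (Set.Icc a b) := by
    apply monotoneOn_of_deriv_nonneg (convex_Icc a b)
    · exact fun t ht => ((h t ht).choose_spec.1).continuousAt.continuousWithinAt
    · intro t ht
      rw [interior_Icc] at ht
      exact ((h t (Set.Ioo_subset_Icc_self ht)).choose_spec.1).differentiableAt.differentiableWithinAt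
    · intro t ht
      rw [interior_Icc] at ht
      obtain ⟨f', hf', hf'0⟩ := h t (Set.Ioo_subset_Icc_self ht)
      rw [hf'.deriv]; exact hf'0
  exact hmono (Set.left_mem_Icc.2 hab) (Set.right_mem_Icc.2 hab) hab

set_option maxHeartbeats 1000000 in
theorem unconditional_alignment_sublinear_growth
    (D V : ℝ → ℝ) (p α lam C : ℝ)
    (hp : 3 < p) (hα1 : 0 ≤ α) (hα2 : α < 1)
    (hlam : 0 < lam) (hC : 0 < C)
    (hDnonneg : ∀ t, 0 ≤ t → 0 ≤ D t)
    (hVnonneg : ∀ t, 0 ≤ t → 0 ≤ V t)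
    (hDdiff : Differentiable ℝ D)
    (hVdiff : Differentiable ℝ V)
    (hDode : ∀ t, 0 ≤ t → deriv D t ≤ V t)
    (hVode : ∀ t, 0 ≤ t → deriv V t ≤ -lam * C * D t ^ (-α) * V t ^ (p - 1))
    (hD0 : 0 < D 0) (hV0 : 0 < V 0) :
    ∃ K₁ K₂ : ℝ, 0 < K₁ ∧ 0 < K₂ ∧ ∀ t, 0 ≤ t →
      D t ≤ K₁ * (t + 1) ^ (1 - (1 - α) / (p - 2 - α)) ∧
      V t ≤ K₂ * (t + 1) ^ (-((1 - α) / (p - 2 - α))) := by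
  have hp3 : (0:ℝ) < p - 3 := by linarith
  have h1α : (0:ℝ) < 1 - α := by linarith
  have hpα : (0:ℝ) < p - 2 - α := by linarith
  set β : ℝ := (1 - α) / (p - 2 - α) with hβ
  have hβpos : 0 < β := div_pos h1α hpα
  have hβlt : β < 1 := by rw [hβ, div_lt_one hpα]; linarith
  have hlamC : 0 < lam * C := mul_pos hlam hC
  -- V is antitone on [0, ∞)
  have hVanti : AntitoneOn V (Set.Ici 0) := by
    apply antitoneOn_of_deriv_nonpos (convex_Ici 0) hVdiff.continuous.continuousOn
      (fun t _ => (hVdiff t).differentiableWithinAt)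
    intro t ht
    rw [interior_Ici] at ht
    have h := hVode t ht.le
    have h2 : 0 ≤ lam * C * D t ^ (-α) * V t ^ (p-1) :=
      mul_nonneg (mul_nonneg hlamC.le (Real.rpow_nonneg (hDnonneg t ht.le) _))
        (Real.rpow_nonneg (hVnonneg t ht.le) _)
    linarith
  have hVle : ∀ t, 0 ≤ t → V t ≤ V 0 :=
    fun t ht => hVanti Set.self_mem_Ici ht ht
  -- D is positive wherever V is positive (when α > 0)
  have hDpos : 0 < α → ∀ t0, 0 ≤ t0 → 0 < V t0 → 0 < D t0 := by
    intro hα t0 ht0 hVt0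
    by_contra hD
    push_neg at hD
    have hDt0 : D t0 = 0 := le_antisymm hD (hDnonneg t0 ht0)
    set S : Set ℝ := {u | 0 ≤ u ∧ D u = 0} with hS
    have hne : S.Nonempty := ⟨t0, ht0, hDt0⟩
    have hbdd : BddBelow S := ⟨0, fun u hu => hu.1⟩
    set s := sInf S with hs
    have hsmem : s ∈ S := by
      have hclosed : IsClosed S := by
        have : S = Set.Ici 0 ∩ D ⁻¹' {0} := by ext u; simp [hS, Set.mem_Ici]
        rw [this]
        exact isClosed_Ici.inter (isClosed_singleton.preimage hDdiff.continuous)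
      exact hclosed.csInf_mem hne hbdd
    have hs0 : 0 ≤ s := hsmem.1
    have hsD : D s = 0 := hsmem.2
    have hspos : 0 < s := by
      rcases hs0.lt_or_eq with h | h
      · exact h
      · exact absurd hsD (by rw [← h]; exact hD0.ne')
    have hst0 : s ≤ t0 := csInf_le hbdd ⟨ht0, hDt0⟩
    have hVs : 0 < V s := lt_of_lt_of_le hVt0 (hVanti hs0 ht0 hst0)
    have hdle : deriv V s ≤ 0 := by
      have h := hVode s hs0
      rw [hsD, Real.zero_rpow (neg_ne_zero.2 hα.ne')] at h
      simpa using h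
    obtain ⟨R, hR⟩ : ∃ x : ℝ, x = (1 - deriv V s)/(lam * C * V s ^ (p-1)) := ⟨_, rfl⟩
    have hvp : 0 < V s ^ (p-1) := Real.rpow_pos_of_pos hVs _
    have hRpos : 0 < R := by
      rw [hR]; exact div_pos (by linarith) (mul_pos hlamC hvp)
    obtain ⟨ρ, hρ⟩ : ∃ x : ℝ, x = R ^ (-1/α) := ⟨_, rfl⟩
    have hρpos : 0 < ρ := by rw [hρ]; exact Real.rpow_pos_of_pos hRpos _
    have hslope : Tendsto (slope V s) (nhdsWithin s {s}ᶜ) (nhds (deriv V s)) :=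
      hasDerivAt_iff_tendsto_slope.1 (hVdiff s).hasDerivAt
    have h1 : ∀ᶠ u in nhdsWithin s (Set.Iio s), deriv V s - 1 < slope V s u := by
      have hmono : nhdsWithin s (Set.Iio s) ≤ nhdsWithin s {s}ᶜ :=
        nhdsWithin_mono s (fun x hx => ne_of_lt hx)
      exact (hslope.mono_left hmono).eventually (eventually_gt_nhds (by linarith))
    have h2 : ∀ᶠ u in nhdsWithin s (Set.Iio s), D u < ρ := by
      have h2' : ∀ᶠ u in nhds s, D u < ρ :=
        Tendsto.eventually_lt_const (by rw [hsD]; exact hρpos)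
          (hDdiff.continuous.continuousAt)
      exact h2'.filter_mono nhdsWithin_le_nhds
    obtain ⟨a, has, hsub⟩ := mem_nhdsLT_iff_exists_Ioo_subset.1 (h1.and h2)
    have has' : a < s := has
    obtain ⟨t, hta, hts⟩ : ∃ t, max a 0 < t ∧ t < s :=
      ⟨(max a 0 + s)/2, by constructor <;> [linarith [max_lt has' hspos]; linarith [max_lt has' hspos]]⟩
    have ht0' : 0 ≤ t := le_of_lt (lt_of_le_of_lt (le_max_right a 0) hta)
    have htIoo : t ∈ Set.Ioo a s := ⟨lt_of_le_of_lt (le_max_left a 0) hta, hts⟩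
    obtain ⟨ξ, hξ, hξd⟩ := exists_deriv_eq_slope V hts hVdiff.continuous.continuousOn
      hVdiff.differentiableOn
    have hξ0 : 0 ≤ ξ := le_of_lt (lt_of_le_of_lt ht0' hξ.1)
    have hξs : ξ < s := hξ.2
    have hξIoo : ξ ∈ Set.Ioo a s := ⟨lt_trans htIoo.1 hξ.1, hξs⟩
    have hslope_t : deriv V s - 1 < slope V s t := (hsub htIoo).1
    have hDξρ : D ξ < ρ := (hsub hξIoo).2
    have hDξpos : 0 < D ξ := by
      rcases (hDnonneg ξ hξ0).lt_or_eq with h | h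
      · exact h
      · exact absurd (csInf_le hbdd ⟨hξ0, h.symm⟩) (not_le_of_gt hξs)
    have heq : deriv V ξ = slope V s t := by
      rw [hξd, slope_def_field]
      rw [← neg_sub (V t) (V s), ← neg_sub t s, neg_div_neg_eq]
    have hderiv_ξ : deriv V s - 1 < deriv V ξ := heq ▸ hslope_t
    have hVξ : V s ≤ V ξ := hVanti hξ0 hs0 hξs.le
    have hVξp : V s ^ (p-1) ≤ V ξ ^ (p-1) := Real.rpow_le_rpow hVs.le hVξ (by linarith)
    have hodeξ := hVode ξ hξ0
    have hDξα : 0 ≤ D ξ ^ (-α) := Real.rpow_nonneg (hDnonneg ξ hξ0) _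
    have hkey : lam * C * D ξ ^ (-α) * V s ^ (p-1) < 1 - deriv V s := by
      have h5 : lam * C * D ξ ^ (-α) * V s ^ (p-1) ≤ lam * C * D ξ ^ (-α) * V ξ ^ (p-1) :=
        mul_le_mul_of_nonneg_left hVξp (mul_nonneg hlamC.le hDξα)
      linarith
    have hDξR : D ξ ^ (-α) < R := by
      rw [hR, lt_div_iff₀ (mul_pos hlamC hvp)]
      calc D ξ ^ (-α) * (lam * C * V s ^ (p-1)) = lam * C * D ξ ^ (-α) * V s ^ (p-1) := by ring
      _ < 1 - deriv V s := hkey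
    have hρR : ρ ^ (-α) = R := by
      rw [hρ, ← Real.rpow_mul hRpos.le]
      rw [show (-1/α) * (-α) = 1 by field_simp]
      exact Real.rpow_one R
    have hcontra : R < D ξ ^ (-α) := by
      rw [← hρR]
      exact Real.rpow_lt_rpow_of_neg hDξpos hDξρ (neg_lt_zero.2 hα)
    linarith
  -- constants
  obtain ⟨c4, hc4⟩ : ∃ x : ℝ, x = (p-3)*(lam*C)/(1-α) := ⟨_, rfl⟩
  have hc4pos : 0 < c4 := by rw [hc4]; exact div_pos (mul_pos hp3 hlamC) h1α
  have hApos : 0 < D 0 ^ (1-α) := Real.rpow_pos_of_pos hD0 _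
  obtain ⟨Mc, hMc⟩ : ∃ x : ℝ, x = D 0 ^ (1-α) * V 0 ^ (p-3) + 1/c4 := ⟨_, rfl⟩
  have hMcpos : 0 < Mc := by
    rw [hMc]
    have h := Real.rpow_pos_of_pos hV0 (p-3)
    positivity
  obtain ⟨sexp, hsexp⟩ : ∃ x : ℝ, x = -(α/(1-α)) := ⟨_, rfl⟩
  have hsexp0 : sexp ≤ 0 := by rw [hsexp]; exact neg_nonpos.2 (div_nonneg hα1 h1α.le)
  obtain ⟨r, hr⟩ : ∃ x : ℝ, x = α*(p-3)/(1-α) := ⟨_, rfl⟩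
  have hr0 : 0 ≤ r := by rw [hr]; exact div_nonneg (mul_nonneg hα1 hp3.le) h1α.le
  obtain ⟨c5, hc5⟩ : ∃ x : ℝ, x = Mc ^ sexp := ⟨_, rfl⟩
  have hc5pos : 0 < c5 := by rw [hc5]; exact Real.rpow_pos_of_pos hMcpos _
  obtain ⟨q, hq⟩ : ∃ x : ℝ, x = p - 1 + r := ⟨_, rfl⟩
  have hq2 : 2 < q := by rw [hq]; linarith
  obtain ⟨c6, hc6⟩ : ∃ x : ℝ, x = (q-1)*(lam*C*c5) := ⟨_, rfl⟩
  have hc6pos : 0 < c6 := by rw [hc6]; exact mul_pos (by linarith) (mul_pos hlamC hc5pos)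
  obtain ⟨m, hm⟩ : ∃ x : ℝ, x = min (V 0 ^ (1-q)) c6 := ⟨_, rfl⟩
  have hmpos : 0 < m := by rw [hm]; exact lt_min (Real.rpow_pos_of_pos hV0 _) hc6pos
  obtain ⟨K₂, hK₂⟩ : ∃ x : ℝ, x = m ^ (-β) := ⟨_, rfl⟩
  have hK₂pos : 0 < K₂ := by rw [hK₂]; exact Real.rpow_pos_of_pos hmpos _
  -- exponent identities
  have hq' : q = (p - 1 - 2*α)/(1-α) := by rw [hq, hr]; field_simp; ring
  have h1q : 1 - q = -((p-2-α)/(1-α)) := by rw [hq']; field_simp; ring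
  have hq1 : (1:ℝ) < q := by linarith
  have hβq : 1/(1-q) = -β := by
    rw [h1q, hβ, div_neg, one_div_div]
  -- the V bound
  have hVbound : ∀ b, 0 ≤ b → V b ≤ K₂ * (b+1) ^ (-β) := by
    intro b hb
    by_cases hposb : ∀ u ∈ Set.Icc 0 b, 0 < V u
    · -- positive case
      have hDposIcc : ∀ u ∈ Set.Icc 0 b, α = 0 ∨ 0 < D u := by
        intro u hu
        rcases hα1.lt_or_eq with h | h
        · exact Or.inr (hDpos h u hu.1 (hposb u hu))
        · exact Or.inl h.symm
      have key : ∀ u ∈ Set.Icc 0 b, deriv V u ≤ -(lam*C*c5) * V u ^ q := by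
        intro u hu
        have hVu : 0 < V u := hposb u hu
        -- Step 1: integrate g1 from 0 to u
        have hg1 : V 0 ^ (3-p) - c4 * D 0 ^ (1-α) ≤ V u ^ (3-p) - c4 * D u ^ (1-α) := by
          refine le_of_hasDerivAt_nonneg (f := fun t => V t ^ (3-p) - c4 * D t ^ (1-α)) hu.1 ?_
          intro w hw
          have hw' : w ∈ Set.Icc 0 b := ⟨hw.1, hw.2.trans hu.2⟩
          have hVw : 0 < V w := hposb w hw'
          have hDw : α = 0 ∨ 0 < D w := hDposIcc w hw'
          have hDwor : D w ≠ 0 ∨ 1 ≤ 1 - α := by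
            rcases hDw with h | h
            · right; rw [h]; norm_num
            · left; exact h.ne'
          have hd1 : HasDerivAt (fun t => V t ^ (3-p))
              (deriv V w * (3-p) * V w ^ (2-p)) w := by
            have h := (hVdiff w).hasDerivAt.rpow_const (p := 3-p) (Or.inl hVw.ne')
            rwa [show (3:ℝ)-p-1 = 2-p by ring] at h
          have hd2 : HasDerivAt (fun t => D t ^ (1-α))
              (deriv D w * (1-α) * D w ^ (-α)) w := by
            have h := (hDdiff w).hasDerivAt.rpow_const (p := 1-α) hDwor
            rwa [show (1:ℝ)-α-1 = -α by ring] at h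
          refine ⟨_, hd1.sub (hd2.const_mul c4), ?_⟩
          have hDwα : 0 ≤ D w ^ (-α) := Real.rpow_nonneg (hDnonneg w hw'.1) _
          have e1 : V w ^ (2-p) * V w ^ (p-1) = V w := by
            rw [← Real.rpow_add hVw, show (2:ℝ)-p+(p-1) = 1 by ring, Real.rpow_one]
          have hN : (3-p) * V w ^ (2-p) ≤ 0 :=
            mul_nonpos_of_nonpos_of_nonneg (by linarith) (Real.rpow_nonneg hVw.le _)
          have h3 := mul_le_mul_of_nonpos_left (hVode w hw'.1) hN
          have e2 : (3-p) * V w ^ (2-p) * (-lam * C * D w ^ (-α) * V w ^ (p-1))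
              = (p-3)*(lam*C)* D w ^ (-α) * V w := by
            linear_combination ((p-3)*(lam*C)*D w ^ (-α)) * e1
          have hT1 : (p-3)*(lam*C) * D w ^ (-α) * V w ≤ deriv V w * (3-p) * V w ^ (2-p) := by
            linarith [h3, e2]
          have hc4e : c4 * (1-α) = (p-3)*(lam*C) := by
            rw [hc4]; field_simp
          have h6 := mul_le_mul_of_nonneg_left (hDode w hw'.1)
            (mul_nonneg (mul_nonneg hc4pos.le h1α.le) hDwα)
          have h7 : c4*(1-α)* D w ^ (-α) * V w = (p-3)*(lam*C)* D w ^ (-α) * V w := by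
            linear_combination (D w ^ (-α) * V w) * hc4e
          have hT2 : c4 * (deriv D w * (1-α) * D w ^ (-α)) ≤ (p-3)*(lam*C) * D w ^ (-α) * V w := by
            linarith [h6, h7]
          linarith
        -- Step 2
        have hV03 : 0 < V 0 ^ (3-p) := Real.rpow_pos_of_pos hV0 _
        have hVu3 : 0 < V u ^ (3-p) := Real.rpow_pos_of_pos hVu _
        have hDu : D u ^ (1-α) ≤ D 0 ^ (1-α) + V u ^ (3-p) / c4 := by
          have e : c4 * (D 0 ^ (1-α) + V u ^ (3-p)/c4) = c4 * D 0 ^ (1-α) + V u ^ (3-p) := by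
            field_simp
          have hmul : c4 * D u ^ (1-α) ≤ c4 * (D 0 ^ (1-α) + V u ^ (3-p) / c4) := by
            linarith [hg1, hV03, e]
          exact le_of_mul_le_mul_left hmul hc4pos
        -- Step 3: c5 * V u ^ r ≤ D u ^ (-α)
        have hstep : c5 * V u ^ r ≤ D u ^ (-α) := by
          by_cases hα0 : α = 0
          · rw [hc5, hsexp, hr, hα0]
            norm_num
          · have hDupos : 0 < D u := (hDposIcc u hu).resolve_left hα0
            have hc' : D 0 ^ (1-α) + V u ^ (3-p)/c4 ≤ V u ^ (3-p) * Mc := by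
              have h8 : V 0 ^ (3-p) ≤ V u ^ (3-p) :=
                Real.rpow_le_rpow_of_nonpos hVu (hVle u hu.1) (by linarith)
              have h9 : V 0 ^ (3-p) * V 0 ^ (p-3) = 1 := by
                rw [← Real.rpow_add hV0, show (3:ℝ)-p+(p-3) = 0 by ring, Real.rpow_zero]
              have h10 : (1:ℝ) ≤ V u ^ (3-p) * V 0 ^ (p-3) := by
                have h := mul_le_mul_of_nonneg_right h8 (Real.rpow_pos_of_pos hV0 (p-3)).le
                linarith [h9, h]
              have h11 := mul_le_mul_of_nonneg_left h10 hApos.le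
              have e : V u ^ (3-p) * Mc
                  = D 0 ^ (1-α) * (V u ^ (3-p) * V 0 ^ (p-3)) + V u ^ (3-p)/c4 := by
                rw [hMc]; field_simp
              linarith [h11, e]
            have hsum : 0 < D 0 ^ (1-α) + V u ^ (3-p)/c4 :=
              add_pos hApos (div_pos hVu3 hc4pos)
            have hchain1 : (V u ^ (3-p) * Mc) ^ sexp ≤ (D 0 ^ (1-α) + V u ^ (3-p)/c4) ^ sexp :=
              Real.rpow_le_rpow_of_nonpos hsum hc' hsexp0
            have hchain2 : (D 0 ^ (1-α) + V u ^ (3-p)/c4) ^ sexp ≤ (D u ^ (1-α)) ^ sexp :=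
              Real.rpow_le_rpow_of_nonpos (Real.rpow_pos_of_pos hDupos _) hDu hsexp0
            have hex2 : (1-α)*sexp = -α := by rw [hsexp]; field_simp
            have hid1 : (D u ^ (1-α)) ^ sexp = D u ^ (-α) := by
              rw [← Real.rpow_mul (hDnonneg u hu.1), hex2]
            have hex : (3-p)*sexp = r := by rw [hsexp, hr]; field_simp; ring
            have hid2 : (V u ^ (3-p) * Mc) ^ sexp = V u ^ r * c5 := by
              rw [Real.mul_rpow hVu3.le hMcpos.le, ← Real.rpow_mul hVu.le, hex, hc5]
            rw [← hid1]
            calc c5 * V u ^ r = V u ^ r * c5 := by ring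
            _ = (V u ^ (3-p) * Mc) ^ sexp := hid2.symm
            _ ≤ (D 0 ^ (1-α) + V u ^ (3-p)/c4) ^ sexp := hchain1
            _ ≤ (D u ^ (1-α)) ^ sexp := hchain2
        -- combine
        have hVup : 0 ≤ V u ^ (p-1) := Real.rpow_nonneg hVu.le _
        have hneg : -(lam*C) * V u ^ (p-1) ≤ 0 :=
          mul_nonpos_of_nonpos_of_nonneg (neg_nonpos.2 hlamC.le) hVup
        have h12 := mul_le_mul_of_nonpos_left hstep hneg
        have e3 : V u ^ r * V u ^ (p-1) = V u ^ q := by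
          rw [← Real.rpow_add hVu, hq]
          congr 1
          ring
        have e3' : (-(lam*C) * V u ^ (p-1)) * (c5 * V u ^ r) = -(lam*C*c5) * V u ^ q := by
          linear_combination (-(lam*C*c5)) * e3
        have h13 := hVode u hu.1
        linarith [h12, e3', h13]
      -- Step 4: integrate g2 from 0 to b
      have hg2 : V 0 ^ (1-q) - c6 * 0 ≤ V b ^ (1-q) - c6 * b := by
        refine le_of_hasDerivAt_nonneg (f := fun t => V t ^ (1-q) - c6 * t) hb ?_
        intro w hw
        have hVw : 0 < V w := hposb w hw
        have hd1 : HasDerivAt (fun t => V t ^ (1-q))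
            (deriv V w * (1-q) * V w ^ (-q)) w := by
          have h := (hVdiff w).hasDerivAt.rpow_const (p := 1-q) (Or.inl hVw.ne')
          rwa [show (1:ℝ)-q-1 = -q by ring] at h
        have hlin : HasDerivAt (fun t : ℝ => c6 * t) c6 w := by
          simpa using (hasDerivAt_id w).const_mul c6
        refine ⟨_, hd1.sub hlin, ?_⟩
        have hVwq : 0 ≤ V w ^ (-q) := Real.rpow_nonneg hVw.le _
        have hN : (1-q) * V w ^ (-q) ≤ 0 :=
          mul_nonpos_of_nonpos_of_nonneg (by linarith) hVwq
        have h3 := mul_le_mul_of_nonpos_left (key w hw) hN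
        have e1 : V w ^ (-q) * V w ^ q = 1 := by
          rw [← Real.rpow_add hVw, neg_add_cancel, Real.rpow_zero]
        have e2 : (1-q) * V w ^ (-q) * (-(lam*C*c5) * V w ^ q) = c6 := by
          rw [hc6]
          linear_combination ((q-1)*(lam*C*c5)) * e1
        linarith [h3, e2]
      -- Step 5
      have hVb : 0 < V b := hposb b ⟨hb, le_refl b⟩
      have hlow : m * (b+1) ≤ V b ^ (1-q) := by
        have h1 : m ≤ V 0 ^ (1-q) := by rw [hm]; exact min_le_left _ _
        have h2 : m * b ≤ c6 * b :=
          mul_le_mul_of_nonneg_right (by rw [hm]; exact min_le_right _ _) hb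
        linarith [hg2, h1, h2]
      have hmb : 0 < m * (b+1) := mul_pos hmpos (by linarith)
      have hVbeq : V b = (V b ^ (1-q)) ^ (1/(1-q)) := by
        rw [← Real.rpow_mul hVb.le, mul_one_div, div_self (by linarith : (1:ℝ)-q ≠ 0),
          Real.rpow_one]
      have hle : (V b ^ (1-q)) ^ (1/(1-q)) ≤ (m * (b+1)) ^ (1/(1-q)) := by
        apply Real.rpow_le_rpow_of_nonpos hmb hlow
        rw [hβq]; linarith
      have hsplit : (m * (b+1)) ^ (1/(1-q)) = K₂ * (b+1) ^ (-β) := by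
        rw [Real.mul_rpow hmpos.le (by linarith : (0:ℝ) ≤ b+1), hβq, hK₂]
      rw [hVbeq, ← hsplit]
      exact hle
    · -- V vanishes somewhere in [0,b]
      push_neg at hposb
      obtain ⟨u, hu, hVu⟩ := hposb
      have hVu0 : V u = 0 := le_antisymm hVu (hVnonneg u hu.1)
      have hle : V b ≤ V u := hVanti hu.1 hb hu.2
      have hVb0 : V b = 0 := le_antisymm (hVu0 ▸ hle) (hVnonneg b hb)
      rw [hVb0]
      exact mul_nonneg hK₂pos.le (Real.rpow_nonneg (by linarith) _)
  -- the D bound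
  refine ⟨D 0 + K₂/(1-β), K₂, add_pos hD0 (div_pos hK₂pos (by linarith)), hK₂pos,
    fun t ht => ⟨?_, hVbound t ht⟩⟩
  have hg3 : D 0 + (K₂/(1-β)) * ((0+1)^(1-β) - 1) - D 0
      ≤ D 0 + (K₂/(1-β)) * ((t+1)^(1-β) - 1) - D t := by
    refine le_of_hasDerivAt_nonneg
      (f := fun u => D 0 + (K₂/(1-β)) * ((u+1)^(1-β) - 1) - D u) ht ?_
    intro w hw
    have hw1 : (0:ℝ) < w + 1 := by linarith [hw.1]
    have h0 : HasDerivAt (fun t : ℝ => t + 1) 1 w := (hasDerivAt_id w).add_const 1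
    have h1 : HasDerivAt (fun t : ℝ => (t+1)^(1-β)) (1 * (1-β) * (w+1)^(-β)) w := by
      have h := h0.rpow_const (p := 1-β) (Or.inl hw1.ne')
      rwa [show (1:ℝ)-β-1 = -β by ring] at h
    have h2 := ((h1.sub_const 1).const_mul (K₂/(1-β))).const_add (D 0)
    refine ⟨_, h2.sub (hDdiff w).hasDerivAt, ?_⟩
    have e : K₂/(1-β) * (1 * (1-β) * (w+1)^(-β)) = K₂ * (w+1)^(-β) := by
      have hne : (1:ℝ)-β ≠ 0 := by linarith
      field_simp
    have hVw := hVbound w hw.1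
    have hDw := hDode w hw.1
    linarith [e, hVw, hDw]
  have h01 : ((0:ℝ)+1)^(1-β) = 1 := by norm_num
  rw [h01] at hg3
  have hX : (1:ℝ) ≤ (t+1)^(1-β) := by
    calc (1:ℝ) = 1 ^ (1-β) := (Real.one_rpow _).symm
    _ ≤ (t+1)^(1-β) := Real.rpow_le_rpow (by norm_num) (by linarith) (by linarith)
  have hc : 0 < K₂/(1-β) := div_pos hK₂pos (by linarith)
  nlinarith [hg3, hX, mul_le_mul_of_nonneg_left hX hD0.le, hc]
end

section
/- Let p > 3, 0 ≤ α < 1, Λ > 0, β* = (1-α)/(p-2-α), and suppose D̃, Ṽ : [0,∞) → ℝ≥0 satisfy D̃'(τ) = (β*-1) D̃(τ) + Ṽ(τ) and Ṽ'(τ) ≥ β* Ṽ(τ) - Λ D̃(τ)^{-α} Ṽ(τ)^{p-1} with D̃(0), Ṽ(0) > 0. Then with m = min{Ṽ(0), (1-β*)D̃(0), (β*/(Λ(1-β*)^α))^{1/(p-2-α)}} > 0, the region B = [m/(1-β*), ∞) × [m, ∞) is invariant: D̃(τ) ≥ m/(1-β*) and Ṽ(τ) ≥ m for all τ ≥ 0.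 -/
open Real Filter Set Topology

lemma eventually_gt_of_deriv_pos' {f : ℝ → ℝ} {t : ℝ}
    (hf : DifferentiableAt ℝ f t) (h : 0 < deriv f t) :
    ∀ᶠ s in 𝓝[>] t, f t < f s := by
  have h1 : Tendsto (slope f t) (𝓝[≠] t) (𝓝 (deriv f t)) :=
    hasDerivAt_iff_tendsto_slope.mp hf.hasDerivAt
  have h2 : ∀ᶠ s in 𝓝[≠] t, 0 < slope f t s := h1.eventually (eventually_gt_nhds h)
  have h3 : 𝓝[>] t ≤ 𝓝[≠] t := nhdsWithin_mono _ (fun s hs => ne_of_gt hs)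
  filter_upwards [h3 h2, self_mem_nhdsWithin] with s hs hst
  rw [slope_def_field] at hs
  have hst' : 0 < s - t := sub_pos.2 hst
  have := mul_pos hs hst'
  rw [div_mul_cancel₀] at this
  · linarith
  · exact ne_of_gt hst'

lemma invariant_aux (D V : ℝ → ℝ) (A B : ℝ)
    (hD : Differentiable ℝ D) (hV : Differentiable ℝ V)
    (hDA0 : A < D 0) (hVB0 : B < V 0)
    (hDstep : ∀ t, 0 ≤ t → D t = A → B ≤ V t → 0 < deriv D t)
    (hVstep : ∀ t, 0 ≤ t → V t = B → A ≤ D t → 0 < deriv V t) :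
    ∀ τ, 0 ≤ τ → A ≤ D τ ∧ B ≤ V τ := by
  by_contra hcon
  push_neg at hcon
  obtain ⟨τ0, hτ0, hbad0⟩ := hcon
  set S : Set ℝ := {s | 0 ≤ s ∧ (D s < A ∨ V s < B)} with hS
  have hne : S.Nonempty := by
    refine ⟨τ0, hτ0, ?_⟩
    by_cases hA : A ≤ D τ0
    · exact Or.inr (lt_of_not_ge fun h => absurd (hbad0 hA) (not_lt.2 h))
    · exact Or.inl (lt_of_not_ge hA)
  have hbdd : BddBelow S := ⟨0, fun x hx => hx.1⟩
  set t := sInf S with ht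
  have ht0 : 0 ≤ t := le_csInf hne (fun x hx => hx.1)
  have hgood : ∀ s, 0 ≤ s → s < t → A ≤ D s ∧ B ≤ V s := by
    intro s hs hst
    by_contra h
    have hsS : s ∈ S := by
      refine ⟨hs, ?_⟩
      by_cases hA : A ≤ D s
      · exact Or.inr (lt_of_not_ge fun hB => h ⟨hA, hB⟩)
      · exact Or.inl (lt_of_not_ge hA)
    exact absurd (csInf_le hbdd hsS) (not_le.2 hst)
  have hgt : A ≤ D t ∧ B ≤ V t := by
    rcases eq_or_lt_of_le ht0 with h0 | hpos
    · rw [← h0]; exact ⟨hDA0.le, hVB0.le⟩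
    · have hmem : Ioo 0 t ∈ 𝓝[<] t := Ioo_mem_nhdsLT_of_mem ⟨hpos, le_refl t⟩
      constructor
      · refine ge_of_tendsto (show Filter.Tendsto D (𝓝[<] t) (𝓝 (D t)) from
          (hD.continuous.tendsto t).mono_left nhdsWithin_le_nhds) ?_
        filter_upwards [hmem] with s hs
        exact (hgood s hs.1.le hs.2).1
      · refine ge_of_tendsto (show Filter.Tendsto V (𝓝[<] t) (𝓝 (V t)) from
          (hV.continuous.tendsto t).mono_left nhdsWithin_le_nhds) ?_
        filter_upwards [hmem] with s hs
        exact (hgood s hs.1.le hs.2).2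
  have htS : t ∉ S := by
    rintro ⟨-, h | h⟩
    · exact absurd hgt.1 (not_le.2 h)
    · exact absurd hgt.2 (not_le.2 h)
  have hDev : ∀ᶠ s in 𝓝[>] t, A ≤ D s := by
    rcases eq_or_lt_of_le hgt.1 with heq | hlt
    · have := eventually_gt_of_deriv_pos' (hD t) (hDstep t ht0 heq.symm hgt.2)
      filter_upwards [this] with s hs
      rw [← heq] at hs; exact hs.le
    · have : ∀ᶠ s in 𝓝 t, A < D s :=
        (hD.continuous.continuousAt (x := t)).eventually (eventually_gt_nhds hlt)
      exact (this.filter_mono nhdsWithin_le_nhds).mono (fun s hs => hs.le)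
  have hVev : ∀ᶠ s in 𝓝[>] t, B ≤ V s := by
    rcases eq_or_lt_of_le hgt.2 with heq | hlt
    · have := eventually_gt_of_deriv_pos' (hV t) (hVstep t ht0 heq.symm hgt.1)
      filter_upwards [this] with s hs
      rw [← heq] at hs; exact hs.le
    · have : ∀ᶠ s in 𝓝 t, B < V s :=
        (hV.continuous.continuousAt (x := t)).eventually (eventually_gt_nhds hlt)
      exact (this.filter_mono nhdsWithin_le_nhds).mono (fun s hs => hs.le)
  obtain ⟨u, hu, hsub⟩ := mem_nhdsGT_iff_exists_Ioo_subset.mp (hDev.and hVev)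
  obtain ⟨x, hxS, hxu⟩ := exists_lt_of_csInf_lt hne (show sInf S < u from hu)
  have hxt : t ≤ x := csInf_le hbdd hxS
  have hxt' : t < x := lt_of_le_of_ne hxt (fun h => htS (h ▸ hxS))
  have hxgood := hsub ⟨hxt', hxu⟩
  rcases hxS.2 with h | h
  · exact absurd hxgood.1 (not_le.2 h)
  · exact absurd hxgood.2 (not_le.2 h)

set_option maxHeartbeats 1000000 in
theorem lower_invariant_region
    (Dt Vt : ℝ → ℝ) (p α Lam β m : ℝ)
    (hp : 3 < p) (hα1 : 0 ≤ α) (hα2 : α < 1) (hLam : 0 < Lam)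
    (hβ : β = (1 - α) / (p - 2 - α))
    (hDnonneg : ∀ τ, 0 ≤ τ → 0 ≤ Dt τ)
    (hVnonneg : ∀ τ, 0 ≤ τ → 0 ≤ Vt τ)
    (hDdiff : Differentiable ℝ Dt)
    (hVdiff : Differentiable ℝ Vt)
    (hDode : ∀ τ, 0 ≤ τ → deriv Dt τ = (β - 1) * Dt τ + Vt τ)
    (hVode : ∀ τ, 0 ≤ τ →
      β * Vt τ - Lam * Dt τ ^ (-α) * Vt τ ^ (p - 1) ≤ deriv Vt τ)
    (hD0 : 0 < Dt 0) (hV0 : 0 < Vt 0)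
    (hm : m = min (min (Vt 0) ((1 - β) * Dt 0))
      ((β / (Lam * (1 - β) ^ α)) ^ (1 / (p - 2 - α)))) :
    0 < m ∧ ∀ τ, 0 ≤ τ → m / (1 - β) ≤ Dt τ ∧ m ≤ Vt τ := by
  have hq : 0 < p - 2 - α := by linarith
  have hβ0 : 0 < β := by rw [hβ]; exact div_pos (by linarith) hq
  have hβ1 : β < 1 := by rw [hβ, div_lt_one hq]; linarith
  have h1β : 0 < 1 - β := by linarith
  have hpow1β : 0 < (1 - β) ^ α := Real.rpow_pos_of_pos h1β α
  have hbase : 0 < β / (Lam * (1 - β) ^ α) := div_pos hβ0 (mul_pos hLam hpow1β)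
  have hm0 : 0 < m := by
    rw [hm]
    exact lt_min (lt_min hV0 (mul_pos h1β hD0)) (Real.rpow_pos_of_pos hbase _)
  have hm1 : m ≤ Vt 0 := by
    rw [hm]; exact le_trans (min_le_left _ _) (min_le_left _ _)
  have hm2 : m ≤ (1 - β) * Dt 0 := by
    rw [hm]; exact le_trans (min_le_left _ _) (min_le_right _ _)
  have hm3 : m ≤ (β / (Lam * (1 - β) ^ α)) ^ (1 / (p - 2 - α)) := by
    rw [hm]; exact min_le_right _ _
  have hmq : Lam * (1 - β) ^ α * m ^ (p - 2 - α) ≤ β := by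
    have hKq : ((β / (Lam * (1 - β) ^ α)) ^ (1 / (p - 2 - α))) ^ (p - 2 - α)
        = β / (Lam * (1 - β) ^ α) := by
      rw [← Real.rpow_mul hbase.le, one_div_mul_cancel (ne_of_gt hq), Real.rpow_one]
    have h1 : m ^ (p - 2 - α) ≤ β / (Lam * (1 - β) ^ α) := by
      calc m ^ (p - 2 - α) ≤ ((β / (Lam * (1 - β) ^ α)) ^ (1 / (p - 2 - α))) ^ (p - 2 - α) :=
            Real.rpow_le_rpow hm0.le hm3 hq.le
        _ = _ := hKq
    rw [le_div_iff₀ (mul_pos hLam hpow1β)] at h1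
    calc Lam * (1 - β) ^ α * m ^ (p - 2 - α)
        = m ^ (p - 2 - α) * (Lam * (1 - β) ^ α) := by ring
      _ ≤ β := h1
  set s : ℝ := (p - 2 - α) / (α + 1) with hs_def
  have hα1' : (0:ℝ) < α + 1 := by linarith
  have hs0 : 0 < s := div_pos hq hα1'
  have key : ∀ x : ℝ, 0 < x → x < 1 → ∀ τ, 0 ≤ τ →
      m * (1 - x) ^ (s + 1) / (1 - β) ≤ Dt τ ∧ m * (1 - x) ≤ Vt τ := by
    intro x hx0 hx1
    set y : ℝ := 1 - x with hy_def
    have hy0 : 0 < y := by simp only [hy_def]; linarith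
    have hy1 : y < 1 := by simp only [hy_def]; linarith
    set A : ℝ := m * y ^ (s + 1) / (1 - β) with hA_def
    set B : ℝ := m * y with hB_def
    have hys1 : y ^ (s + 1) < 1 := Real.rpow_lt_one hy0.le hy1 (by linarith)
    have hyspos : 0 < y ^ (s + 1) := Real.rpow_pos_of_pos hy0 _
    have hA0pos : 0 < A := by
      rw [hA_def]; exact div_pos (mul_pos hm0 hyspos) h1β
    have hB0pos : 0 < B := mul_pos hm0 hy0
    have hys : y ^ (s + 1) < y := by
      calc y ^ (s + 1) < y ^ (1:ℝ) := Real.rpow_lt_rpow_of_exponent_gt hy0 hy1 (by linarith)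
        _ = y := Real.rpow_one y
    have h1βA : (1 - β) * A = m * y ^ (s + 1) := by
      rw [hA_def]; field_simp
    have hDA0 : A < Dt 0 := by
      have h2 : A < m / (1 - β) := by
        rw [hA_def, div_lt_div_iff₀ h1β h1β]
        have := mul_lt_mul_of_pos_left hys1 hm0
        nlinarith
      have h3 : m / (1 - β) ≤ Dt 0 := by
        rw [div_le_iff₀ h1β]; nlinarith
      linarith
    have hVB0 : B < Vt 0 := by
      have : B < m := by rw [hB_def]; nlinarith
      linarith
    have hDstep : ∀ t, 0 ≤ t → Dt t = A → B ≤ Vt t → 0 < deriv Dt t := by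
      intro t ht hDt hVt
      rw [hDode t ht, hDt]
      have h4 : m * y ^ (s + 1) < m * y := mul_lt_mul_of_pos_left hys hm0
      have h5 : (β - 1) * A = -(m * y ^ (s + 1)) := by
        rw [← h1βA]; ring
      rw [hB_def] at hVt
      rw [h5]; linarith
    have hVstep : ∀ t, 0 ≤ t → Vt t = B → A ≤ Dt t → 0 < deriv Vt t := by
      intro t ht hVt hDt
      have hDtpos : 0 < Dt t := lt_of_lt_of_le hA0pos hDt
      have hDinv : Dt t ^ (-α) ≤ A ^ (-α) :=
        Real.rpow_le_rpow_of_nonpos hA0pos hDt (neg_nonpos.2 hα1)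
      have hApow : A ^ (-α) = m ^ (-α) * y ^ ((s + 1) * (-α)) * (1 - β) ^ α := by
        rw [hA_def, div_eq_mul_inv, Real.mul_rpow (by positivity) (by positivity),
          Real.mul_rpow hm0.le hyspos.le, ← Real.rpow_mul hy0.le,
          Real.inv_rpow h1β.le, Real.rpow_neg h1β.le, inv_inv]
      have hBpow : B ^ (p - 1) = m ^ (p - 1) * y ^ (p - 1) := by
        rw [hB_def, Real.mul_rpow hm0.le hy0.le]
      have e1 : m ^ (-α) * m ^ (p - 1) = m ^ (p - 2 - α) * m := by
        rw [← Real.rpow_add hm0, ← Real.rpow_add_one hm0.ne']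
        congr 1; ring
      have e2 : y ^ ((s + 1) * (-α)) * y ^ (p - 1) = y ^ s * y := by
        rw [← Real.rpow_add hy0, ← Real.rpow_add_one hy0.ne']
        congr 1
        rw [hs_def]; field_simp; ring
      have heq : Lam * A ^ (-α) * B ^ (p - 1)
          = (Lam * (1 - β) ^ α * m ^ (p - 2 - α)) * (y ^ s * B) := by
        calc Lam * A ^ (-α) * B ^ (p - 1)
            = Lam * (1 - β) ^ α * (m ^ (-α) * m ^ (p - 1)) * (y ^ ((s + 1) * (-α)) * y ^ (p - 1)) := by
              rw [hApow, hBpow]; ring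
          _ = Lam * (1 - β) ^ α * (m ^ (p - 2 - α) * m) * (y ^ s * y) := by rw [e1, e2]
          _ = (Lam * (1 - β) ^ α * m ^ (p - 2 - α)) * (y ^ s * (m * y)) := by ring
          _ = _ := by rw [← hB_def]
      have hmain : Lam * A ^ (-α) * B ^ (p - 1) < β * B := by
        rw [heq]
        have hysB : y ^ s * B < B :=
          mul_lt_of_lt_one_left hB0pos (Real.rpow_lt_one hy0.le hy1 hs0)
        have h1 : (Lam * (1 - β) ^ α * m ^ (p - 2 - α)) * (y ^ s * B) ≤ β * (y ^ s * B) :=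
          mul_le_mul_of_nonneg_right hmq
            (mul_nonneg (Real.rpow_nonneg hy0.le _) hB0pos.le)
        have h2 : β * (y ^ s * B) < β * B := mul_lt_mul_of_pos_left hysB hβ0
        linarith
      have hchain : Lam * Dt t ^ (-α) * B ^ (p - 1) ≤ Lam * A ^ (-α) * B ^ (p - 1) := by
        apply mul_le_mul_of_nonneg_right _ (Real.rpow_nonneg hB0pos.le _)
        exact mul_le_mul_of_nonneg_left hDinv hLam.le
      have hode := hVode t ht
      rw [hVt] at hode
      linarith
    exact invariant_aux Dt Vt A B hDdiff hVdiff hDA0 hVB0 hDstep hVstep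
  refine ⟨hm0, fun τ hτ => ⟨?_, ?_⟩⟩
  · by_contra h
    push_neg at h
    have hδ : 0 < m - Dt τ * (1 - β) := by
      have := (lt_div_iff₀ h1β).mp h
      linarith
    set δ : ℝ := m - Dt τ * (1 - β) with hδ_def
    set x : ℝ := min (1/2) (δ / (2 * m * (s + 1))) with hx_def
    have hx0 : 0 < x := lt_min (by norm_num) (div_pos hδ (by positivity))
    have hx1 : x < 1 := lt_of_le_of_lt (min_le_left _ _) (by norm_num)
    have hk := (key x hx0 hx1 τ hτ).1
    rw [div_le_iff₀ h1β] at hk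
    have hbern : 1 + (s + 1) * (-x) ≤ (1 + -x) ^ (s + 1) :=
      one_add_mul_self_le_rpow_one_add (by linarith) (by linarith)
    rw [show (1:ℝ) + -x = 1 - x from by ring] at hbern
    have hbern' : m * (1 + (s + 1) * (-x)) ≤ m * (1 - x) ^ (s + 1) :=
      mul_le_mul_of_nonneg_left hbern hm0.le
    have hxb : m * (s + 1) * x ≤ δ / 2 := by
      have h6 : x ≤ δ / (2 * m * (s + 1)) := min_le_right _ _
      rw [le_div_iff₀ (by positivity)] at h6
      linarith
    linarith [hk, hbern', hxb, hδ]
  · by_contra h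
    push_neg at h
    have hVτ := hVnonneg τ hτ
    have hx0 : 0 < (m - Vt τ) / (2 * m) := div_pos (by linarith) (by linarith)
    have hx1 : (m - Vt τ) / (2 * m) < 1 := by
      rw [div_lt_one (by linarith)]; linarith
    have hk := (key _ hx0 hx1 τ hτ).2
    have hmx : m * (1 - (m - Vt τ) / (2 * m)) = m - (m - Vt τ) / 2 := by
      field_simp
    rw [hmx] at hk
    linarith
end

section
/- Let p > 3, 0 ≤ α < 1, λ ≤ Λ, and suppose D, V : [0,∞) → ℝ>0 satisfy the exact system D'(t) = V(t), V'(t) = -φ(D(t)) V(t)^{p-1} with λ r^{-α} ≤ φ(r) ≤ Λ r^{-α}, and D(0), V(0) > 0. Then there exist positive constants k₁ ≤ K₁ and k₂ ≤ K₂ with k₁ (t+1)^{1-β*} ≤ D(t) ≤ K₁ (t+1)^{1-β*} and k₂ (t+1)^{-β*} ≤ V(t) ≤ K₂ (t+1)^{-β*} for all t ≥ 0, where β* = (1-α)/(p-2-α). -/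
open Real Set

/-- flip a power inequality: if `c ≤ v ^ (-s)` then `v ≤ c ^ (-s⁻¹)`. -/
lemma aux_pow_flip {v c s : ℝ} (hv : 0 < v) (hc : 0 < c) (hs : 0 < s)
    (h : c ≤ v ^ (-s)) : v ≤ c ^ (-s⁻¹) := by
  have h2 := Real.rpow_le_rpow_of_nonpos hc h (neg_nonpos.mpr (inv_nonneg.2 hs.le))
  rwa [← Real.rpow_mul hv.le, neg_mul_neg, mul_inv_cancel₀ hs.ne', Real.rpow_one] at h2

lemma aux_pow_flip' {v c s : ℝ} (hv : 0 < v) (hc : 0 < c) (hs : 0 < s)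
    (h : v ^ (-s) ≤ c) : c ^ (-s⁻¹) ≤ v := by
  have h2 := Real.rpow_le_rpow_of_nonpos (Real.rpow_pos_of_pos hv _) h
    (neg_nonpos.mpr (inv_nonneg.2 hs.le))
  rwa [← Real.rpow_mul hv.le, neg_mul_neg, mul_inv_cancel₀ hs.ne', Real.rpow_one] at h2

set_option maxHeartbeats 1000000 in
theorem two_sided_sharpness
    (D V φ : ℝ → ℝ) (p α lam Lam : ℝ)
    (hp : 3 < p) (hα1 : 0 ≤ α) (hα2 : α < 1)
    (hlam : 0 < lam) (hlamLam : lam ≤ Lam)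
    (hφ : ∀ r, 0 < r → lam * r ^ (-α) ≤ φ r ∧ φ r ≤ Lam * r ^ (-α))
    (hDpos : ∀ t, 0 ≤ t → 0 < D t)
    (hVpos : ∀ t, 0 ≤ t → 0 < V t)
    (hDdiff : Differentiable ℝ D)
    (hVdiff : Differentiable ℝ V)
    (hDode : ∀ t, 0 ≤ t → deriv D t = V t)
    (hVode : ∀ t, 0 ≤ t → deriv V t = -φ (D t) * V t ^ (p - 1)) :
    ∃ k₁ K₁ k₂ K₂ : ℝ, 0 < k₁ ∧ k₁ ≤ K₁ ∧ 0 < k₂ ∧ k₂ ≤ K₂ ∧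
      ∀ t, 0 ≤ t →
        k₁ * (t + 1) ^ (1 - (1 - α) / (p - 2 - α)) ≤ D t ∧
        D t ≤ K₁ * (t + 1) ^ (1 - (1 - α) / (p - 2 - α)) ∧
        k₂ * (t + 1) ^ (-((1 - α) / (p - 2 - α))) ≤ V t ∧
        V t ≤ K₂ * (t + 1) ^ (-((1 - α) / (p - 2 - α))) := by
  have hp3 : (0:ℝ) < p - 3 := by linarith
  have h1a : (0:ℝ) < 1 - α := by linarith
  have hpm : (0:ℝ) < p - 2 - α := by linarith
  have hDc : ContinuousOn D (Set.Ici 0) := hDdiff.continuous.continuousOn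
  have hVc : ContinuousOn V (Set.Ici 0) := hVdiff.continuous.continuousOn
  -- derivative facts
  have hDder : ∀ x : ℝ, 0 ≤ x → HasDerivAt D (V x) x := by
    intro x hx
    have := (hDdiff x).hasDerivAt
    rwa [hDode x hx] at this
  have hVder : ∀ x : ℝ, 0 ≤ x → HasDerivAt V (-φ (D x) * V x ^ (p - 1)) x := by
    intro x hx
    have := (hVdiff x).hasDerivAt
    rwa [hVode x hx] at this
  -- D monotone, V antitone on [0,∞)
  have hDmono : MonotoneOn D (Set.Ici 0) := by
    apply monotoneOn_of_deriv_nonneg (convex_Ici 0) hDc hDdiff.differentiableOn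
    intro x hx
    rw [interior_Ici] at hx
    rw [hDode x hx.le]
    exact (hVpos x hx.le).le
  -- derivative of V^(3-p)
  have hGder : ∀ x : ℝ, 0 ≤ x →
      HasDerivAt (fun t => V t ^ (3 - p)) ((p - 3) * (φ (D x) * V x)) x := by
    intro x hx
    have h := (hVder x hx).rpow_const (p := 3 - p) (Or.inl (hVpos x hx).ne')
    convert h using 1
    have key : V x ^ (p - 1) * V x ^ (3 - p - 1) = V x := by
      rw [← Real.rpow_add (hVpos x hx), show p - 1 + (3 - p - 1) = 1 by ring, Real.rpow_one]
    linear_combination ((3 - p) * φ (D x)) * key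
  -- derivative of D^(1-α)
  have hHder : ∀ x : ℝ, 0 ≤ x →
      HasDerivAt (fun t => D t ^ (1 - α)) ((1 - α) * (D x ^ (-α) * V x)) x := by
    intro x hx
    have h := (hDder x hx).rpow_const (p := 1 - α) (Or.inl (hDpos x hx).ne')
    have e : D x ^ (1 - α - 1) = D x ^ (-α) := by norm_num
    rw [e] at h
    convert h using 1
    ring
  -- sandwich functions F1 (monotone) and F2 (antitone)
  have hF1der : ∀ x : ℝ, 0 ≤ x →
      HasDerivAt (fun t => (1 - α) * V t ^ (3 - p) - ((p - 3) * lam) * D t ^ (1 - α))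
        ((p - 3) * (1 - α) * ((φ (D x) - lam * D x ^ (-α)) * V x)) x := by
    intro x hx
    have h := ((hGder x hx).const_mul (1 - α)).sub ((hHder x hx).const_mul ((p - 3) * lam))
    exact h.congr_deriv (by ring)
  have hF2der : ∀ x : ℝ, 0 ≤ x →
      HasDerivAt (fun t => (1 - α) * V t ^ (3 - p) - ((p - 3) * Lam) * D t ^ (1 - α))
        ((p - 3) * (1 - α) * ((φ (D x) - Lam * D x ^ (-α)) * V x)) x := by
    intro x hx
    have h := ((hGder x hx).const_mul (1 - α)).sub ((hHder x hx).const_mul ((p - 3) * Lam))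
    exact h.congr_deriv (by ring)
  have hcG : ContinuousOn (fun t => V t ^ (3 - p)) (Set.Ici 0) :=
    hVc.rpow_const (fun x hx => Or.inl (hVpos x hx).ne')
  have hcH : ContinuousOn (fun t => D t ^ (1 - α)) (Set.Ici 0) :=
    hDc.rpow_const (fun x hx => Or.inl (hDpos x hx).ne')
  have hmono1 : MonotoneOn (fun t => (1 - α) * V t ^ (3 - p) - ((p - 3) * lam) * D t ^ (1 - α))
      (Set.Ici 0) := by
    apply monotoneOn_of_deriv_nonneg (convex_Ici 0)
      ((continuousOn_const.mul hcG).sub (continuousOn_const.mul hcH))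
    · intro x hx
      rw [interior_Ici] at hx
      exact (hF1der x hx.le).differentiableAt.differentiableWithinAt
    · intro x hx
      rw [interior_Ici] at hx
      change 0 ≤ deriv (fun t => (1 - α) * V t ^ (3 - p) - ((p - 3) * lam) * D t ^ (1 - α)) x
      rw [(hF1der x hx.le).deriv]
      have h1 := (hφ (D x) (hDpos x hx.le)).1
      have h2 := (hVpos x hx.le).le
      have := mul_nonneg (sub_nonneg.2 h1) h2
      positivity
  have hanti2 : AntitoneOn (fun t => (1 - α) * V t ^ (3 - p) - ((p - 3) * Lam) * D t ^ (1 - α))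
      (Set.Ici 0) := by
    apply antitoneOn_of_deriv_nonpos (convex_Ici 0)
      ((continuousOn_const.mul hcG).sub (continuousOn_const.mul hcH))
    · intro x hx
      rw [interior_Ici] at hx
      exact (hF2der x hx.le).differentiableAt.differentiableWithinAt
    · intro x hx
      rw [interior_Ici] at hx
      change deriv (fun t => (1 - α) * V t ^ (3 - p) - ((p - 3) * Lam) * D t ^ (1 - α)) x ≤ 0
      rw [(hF2der x hx.le).deriv]
      have h1 := (hφ (D x) (hDpos x hx.le)).2
      have h2 := (hVpos x hx.le).le
      have h3 := mul_nonpos_of_nonpos_of_nonneg (sub_nonpos.2 h1) h2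
      have h4 : (0:ℝ) ≤ (p - 3) * (1 - α) := by positivity
      exact mul_nonpos_of_nonneg_of_nonpos h4 h3
  have h0mem : (0:ℝ) ∈ Set.Ici (0:ℝ) := Set.self_mem_Ici
  have sand1 : ∀ t, 0 ≤ t →
      (1 - α) * V 0 ^ (3 - p) - ((p - 3) * lam) * D 0 ^ (1 - α) ≤
      (1 - α) * V t ^ (3 - p) - ((p - 3) * lam) * D t ^ (1 - α) :=
    fun t ht => hmono1 h0mem ht ht
  have sand2 : ∀ t, 0 ≤ t →
      (1 - α) * V t ^ (3 - p) - ((p - 3) * Lam) * D t ^ (1 - α) ≤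
      (1 - α) * V 0 ^ (3 - p) - ((p - 3) * Lam) * D 0 ^ (1 - α) :=
    fun t ht => hanti2 h0mem ht ht
  set G0 := V 0 ^ (3 - p) with hG0def
  set H0 := D 0 ^ (1 - α) with hH0def
  have hG0 : 0 < G0 := Real.rpow_pos_of_pos (hVpos 0 le_rfl) _
  have hH0 : 0 < H0 := Real.rpow_pos_of_pos (hDpos 0 le_rfl) _
  set ε := min ((p - 3) * lam / (2 * (1 - α))) (G0 / (2 * H0)) with hεdef
  obtain ⟨B, hBdef⟩ : ∃ B : ℝ, B = G0 / H0 + (p - 3) * Lam / (1 - α) := ⟨_, rfl⟩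
  have hLam : 0 < Lam := hlam.trans_le hlamLam
  have hεpos : 0 < ε := lt_min (by positivity) (by positivity)
  have hBpos : 0 < B := by
    rw [hBdef]; exact add_pos (div_pos hG0 hH0) (div_pos (mul_pos hp3 hLam) h1a)
  have hεc : ε * (2 * (1 - α)) ≤ (p - 3) * lam :=
    (le_div_iff₀ (by positivity)).1 (min_le_left _ _)
  have hεH : ε * (2 * H0) ≤ G0 :=
    (le_div_iff₀ (by positivity)).1 (min_le_right _ _)
  have hBmul : (1 - α) * B = (1 - α) * (G0 / H0) + (p - 3) * Lam := by
    rw [hBdef]; field_simp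
  have hB1 : G0 / H0 * H0 = G0 := div_mul_cancel₀ _ hH0.ne'
  have hHt : ∀ t, 0 ≤ t → H0 ≤ D t ^ (1 - α) := fun t ht =>
    Real.rpow_le_rpow (hDpos 0 le_rfl).le (hDmono h0mem ht ht) h1a.le
  -- lower bound:  ε * D^(1-α) ≤ V^(3-p)
  have Glow : ∀ t, 0 ≤ t → ε * D t ^ (1 - α) ≤ V t ^ (3 - p) := by
    intro t ht
    have s1 := sand1 t ht
    have ht2 := hHt t ht
    have hHtpos : 0 < D t ^ (1 - α) := Real.rpow_pos_of_pos (hDpos t ht) _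
    rcases le_or_gt (D t ^ (1 - α)) (2 * H0) with hc | hc
    · have P1 : (0:ℝ) ≤ ε * (2 * H0 - D t ^ (1 - α)) :=
        mul_nonneg hεpos.le (by linarith)
      have P2 : (0:ℝ) ≤ (p - 3) * lam * (D t ^ (1 - α) - H0) :=
        mul_nonneg (mul_pos hp3 hlam).le (by linarith)
      have P3 := mul_le_mul_of_nonneg_left hεH h1a.le
      have P4 := mul_nonneg h1a.le P1
      have key : (1 - α) * (ε * D t ^ (1 - α)) ≤ (1 - α) * V t ^ (3 - p) := by linarith
      exact le_of_mul_le_mul_left key h1a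
    · have P1 : (0:ℝ) ≤ ((p - 3) * lam - ε * (2 * (1 - α))) * D t ^ (1 - α) :=
        mul_nonneg (by linarith) hHtpos.le
      have P2 : (0:ℝ) ≤ (p - 3) * lam * (D t ^ (1 - α) - 2 * H0) :=
        mul_nonneg (mul_pos hp3 hlam).le (by linarith)
      have P3 : (0:ℝ) ≤ (1 - α) * G0 := mul_nonneg h1a.le hG0.le
      have key : (1 - α) * (ε * D t ^ (1 - α)) ≤ (1 - α) * V t ^ (3 - p) := by linarith
      exact le_of_mul_le_mul_left key h1a
  -- upper bound:  V^(3-p) ≤ B * D^(1-α)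
  have Ghigh : ∀ t, 0 ≤ t → V t ^ (3 - p) ≤ B * D t ^ (1 - α) := by
    intro t ht
    have s2 := sand2 t ht
    have ht2 := hHt t ht
    have hq : (1 - α) * G0 ≤ (1 - α) * (G0 / H0) * D t ^ (1 - α) := by
      have : (1 - α) * (G0 / H0) * H0 ≤ (1 - α) * (G0 / H0) * D t ^ (1 - α) := by
        apply mul_le_mul_of_nonneg_left ht2 (by positivity)
      calc (1 - α) * G0 = (1 - α) * (G0 / H0) * H0 := by rw [mul_assoc, hB1]
        _ ≤ _ := this
    have hBH : (1 - α) * B * D t ^ (1 - α) =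
        (1 - α) * (G0 / H0) * D t ^ (1 - α) + (p - 3) * Lam * D t ^ (1 - α) := by
      linear_combination (D t ^ (1 - α)) * hBmul
    have P4 : (0:ℝ) ≤ (p - 3) * Lam * H0 := mul_nonneg (mul_pos hp3 hLam).le hH0.le
    have key : (1 - α) * V t ^ (3 - p) ≤ (1 - α) * (B * D t ^ (1 - α)) := by linarith
    exact le_of_mul_le_mul_left key h1a
  -- convert: bounds on V in terms of D
  set q := (1 - α) / (p - 3) with hqdef
  have hqpos : 0 < q := by positivity
  set Ca := ε ^ (-(p - 3)⁻¹) with hCadef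
  set Cb := B ^ (-(p - 3)⁻¹) with hCbdef
  have hCapos : 0 < Ca := Real.rpow_pos_of_pos hεpos _
  have hCbpos : 0 < Cb := Real.rpow_pos_of_pos hBpos _
  have hepow : ∀ t, 0 ≤ t → ∀ e : ℝ, 0 < e →
      (e * D t ^ (1 - α)) ^ (-(p - 3)⁻¹) = e ^ (-(p - 3)⁻¹) * D t ^ (-q) := by
    intro t ht e he
    rw [Real.mul_rpow he.le (Real.rpow_pos_of_pos (hDpos t ht) _).le,
      ← Real.rpow_mul (hDpos t ht).le]
    congr 1
    rw [hqdef]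
    ring
  have hVup : ∀ t, 0 ≤ t → V t ≤ Ca * D t ^ (-q) := by
    intro t ht
    have h := Glow t ht
    rw [show (3:ℝ) - p = -(p - 3) by ring] at h
    have := aux_pow_flip (hVpos t ht)
      (mul_pos hεpos (Real.rpow_pos_of_pos (hDpos t ht) _)) hp3 h
    rwa [hepow t ht ε hεpos] at this
  have hVlow : ∀ t, 0 ≤ t → Cb * D t ^ (-q) ≤ V t := by
    intro t ht
    have h := Ghigh t ht
    rw [show (3:ℝ) - p = -(p - 3) by ring] at h
    have := aux_pow_flip' (hVpos t ht)
      (mul_pos hBpos (Real.rpow_pos_of_pos (hDpos t ht) _)) hp3 h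
    rwa [hepow t ht B hBpos] at this
  -- Step D: integrate D' = V ≍ D^(-q) via the function D^m, m = 1+q
  set m := (p - 2 - α) / (p - 3) with hmdef
  have hmpos : 0 < m := by positivity
  have hm1 : m - 1 = q := by rw [hmdef, hqdef]; field_simp; ring
  have hPder : ∀ x : ℝ, 0 ≤ x →
      HasDerivAt (fun t => D t ^ m) (m * (V x * D x ^ q)) x := by
    intro x hx
    have h := (hDder x hx).rpow_const (p := m) (Or.inl (hDpos x hx).ne')
    rw [hm1] at h
    convert h using 1
    ring
  have hDq : ∀ x : ℝ, 0 ≤ x → D x ^ (-q) * D x ^ q = 1 := by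
    intro x hx
    rw [← Real.rpow_add (hDpos x hx), neg_add_cancel, Real.rpow_zero]
  have derivUB : ∀ x : ℝ, 0 ≤ x → V x * D x ^ q ≤ Ca := by
    intro x hx
    have h := mul_le_mul_of_nonneg_right (hVup x hx)
      (Real.rpow_pos_of_pos (hDpos x hx) q).le
    rwa [mul_assoc, hDq x hx, mul_one] at h
  have derivLB : ∀ x : ℝ, 0 ≤ x → Cb ≤ V x * D x ^ q := by
    intro x hx
    have h := mul_le_mul_of_nonneg_right (hVlow x hx)
      (Real.rpow_pos_of_pos (hDpos x hx) q).le
    rwa [mul_assoc, hDq x hx, mul_one] at h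
  have hcP : ContinuousOn (fun t => D t ^ m) (Set.Ici 0) :=
    hDc.rpow_const (fun x hx => Or.inl (hDpos x hx).ne')
  have hlinder : ∀ (c : ℝ) (x : ℝ), HasDerivAt (fun t : ℝ => c * t) c x := by
    intro c x
    simpa using (hasDerivAt_id x).const_mul c
  have hlincont : ∀ c : ℝ, ContinuousOn (fun t : ℝ => c * t) (Set.Ici 0) := by
    intro c
    exact (continuous_const.mul continuous_id').continuousOn
  have Pmono : MonotoneOn (fun t => D t ^ m - m * Cb * t) (Set.Ici 0) := by
    apply monotoneOn_of_deriv_nonneg (convex_Ici 0) (hcP.sub (hlincont (m * Cb)))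
    · intro x hx
      rw [interior_Ici] at hx
      exact ((hPder x hx.le).sub (hlinder (m * Cb) x)).differentiableAt.differentiableWithinAt
    · intro x hx
      rw [interior_Ici] at hx
      rw [((hPder x hx.le).sub (hlinder (m * Cb) x)).deriv]
      have := mul_le_mul_of_nonneg_left (derivLB x hx.le) hmpos.le
      linarith
  have Panti : AntitoneOn (fun t => D t ^ m - m * Ca * t) (Set.Ici 0) := by
    apply antitoneOn_of_deriv_nonpos (convex_Ici 0) (hcP.sub (hlincont (m * Ca)))
    · intro x hx
      rw [interior_Ici] at hx
      exact ((hPder x hx.le).sub (hlinder (m * Ca) x)).differentiableAt.differentiableWithinAt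
    · intro x hx
      rw [interior_Ici] at hx
      rw [((hPder x hx.le).sub (hlinder (m * Ca) x)).deriv]
      have := mul_le_mul_of_nonneg_left (derivUB x hx.le) hmpos.le
      linarith
  set k := min (D 0 ^ m) (m * Cb) with hkdef
  set K := max (D 0 ^ m) (m * Ca) with hKdef
  have hD0m : 0 < D 0 ^ m := Real.rpow_pos_of_pos (hDpos 0 le_rfl) _
  have hkpos : 0 < k := lt_min hD0m (mul_pos hmpos hCbpos)
  have hKpos : 0 < K := lt_of_lt_of_le hD0m (le_max_left _ _)
  have sandQ : ∀ t, 0 ≤ t → k * (t + 1) ≤ D t ^ m ∧ D t ^ m ≤ K * (t + 1) := by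
    intro t ht
    have h1 := Pmono h0mem ht ht
    have h2 := Panti h0mem ht ht
    simp only [mul_zero, sub_zero] at h1 h2
    constructor
    · have e1 : k ≤ D 0 ^ m := min_le_left _ _
      have e2 : k * t ≤ m * Cb * t := mul_le_mul_of_nonneg_right (min_le_right _ _) ht
      nlinarith
    · have e1 : D 0 ^ m ≤ K := le_max_left _ _
      have e2 : m * Ca * t ≤ K * t := mul_le_mul_of_nonneg_right (le_max_right _ _) ht
      nlinarith
  -- Step E: extract the final bounds
  have ht1pos : ∀ t : ℝ, 0 ≤ t → (0:ℝ) < t + 1 := fun t ht => by linarith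
  have hDlow : ∀ t, 0 ≤ t → k ^ m⁻¹ * (t + 1) ^ m⁻¹ ≤ D t := by
    intro t ht
    have h := Real.rpow_le_rpow (by positivity) (sandQ t ht).1 (inv_nonneg.2 hmpos.le)
    rwa [← Real.rpow_mul (hDpos t ht).le, mul_inv_cancel₀ hmpos.ne', Real.rpow_one,
      Real.mul_rpow hkpos.le (ht1pos t ht).le] at h
  have hDup : ∀ t, 0 ≤ t → D t ≤ K ^ m⁻¹ * (t + 1) ^ m⁻¹ := by
    intro t ht
    have h := Real.rpow_le_rpow (Real.rpow_pos_of_pos (hDpos t ht) m).le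
      (sandQ t ht).2 (inv_nonneg.2 hmpos.le)
    rwa [← Real.rpow_mul (hDpos t ht).le, mul_inv_cancel₀ hmpos.ne', Real.rpow_one,
      Real.mul_rpow hKpos.le (ht1pos t ht).le] at h
  have hexp1 : 1 - (1 - α) / (p - 2 - α) = m⁻¹ := by
    rw [hmdef, inv_div]
    field_simp
    ring
  have hexp2 : -((1 - α) / (p - 2 - α)) = m⁻¹ * (-q) := by
    rw [hmdef, hqdef, inv_div]
    field_simp
  have hsplit : ∀ (c : ℝ), 0 < c → ∀ t, 0 ≤ t →
      (c ^ m⁻¹ * (t + 1) ^ m⁻¹) ^ (-q) = c ^ (m⁻¹ * (-q)) * (t + 1) ^ (m⁻¹ * (-q)) := by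
    intro c hc t ht
    rw [Real.mul_rpow (Real.rpow_pos_of_pos hc _).le
      (Real.rpow_pos_of_pos (ht1pos t ht) _).le,
      ← Real.rpow_mul hc.le, ← Real.rpow_mul (ht1pos t ht).le]
  have hVup2 : ∀ t, 0 ≤ t →
      V t ≤ Ca * k ^ (m⁻¹ * (-q)) * (t + 1) ^ (m⁻¹ * (-q)) := by
    intro t ht
    have h1 := hVup t ht
    have h2 : D t ^ (-q) ≤ (k ^ m⁻¹ * (t + 1) ^ m⁻¹) ^ (-q) :=
      Real.rpow_le_rpow_of_nonpos (by positivity) (hDlow t ht) (neg_nonpos.2 hqpos.le)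
    rw [hsplit k hkpos t ht] at h2
    calc V t ≤ Ca * D t ^ (-q) := h1
      _ ≤ Ca * (k ^ (m⁻¹ * (-q)) * (t + 1) ^ (m⁻¹ * (-q))) :=
        mul_le_mul_of_nonneg_left h2 hCapos.le
      _ = Ca * k ^ (m⁻¹ * (-q)) * (t + 1) ^ (m⁻¹ * (-q)) := by ring
  have hVlow2 : ∀ t, 0 ≤ t →
      Cb * K ^ (m⁻¹ * (-q)) * (t + 1) ^ (m⁻¹ * (-q)) ≤ V t := by
    intro t ht
    have h1 := hVlow t ht
    have h2 : (K ^ m⁻¹ * (t + 1) ^ m⁻¹) ^ (-q) ≤ D t ^ (-q) :=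
      Real.rpow_le_rpow_of_nonpos (hDpos t ht) (hDup t ht) (neg_nonpos.2 hqpos.le)
    rw [hsplit K hKpos t ht] at h2
    calc Cb * K ^ (m⁻¹ * (-q)) * (t + 1) ^ (m⁻¹ * (-q))
        = Cb * (K ^ (m⁻¹ * (-q)) * (t + 1) ^ (m⁻¹ * (-q))) := by ring
      _ ≤ Cb * D t ^ (-q) := mul_le_mul_of_nonneg_left h2 hCbpos.le
      _ ≤ V t := h1
  -- assemble
  set a₁ := k ^ m⁻¹ with ha1
  set b₁ := K ^ m⁻¹ with hb1
  set a₂ := Cb * K ^ (m⁻¹ * (-q)) with ha2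
  set b₂ := Ca * k ^ (m⁻¹ * (-q)) with hb2
  have ha1pos : 0 < a₁ := Real.rpow_pos_of_pos hkpos _
  have hb1pos : 0 < b₁ := Real.rpow_pos_of_pos hKpos _
  have ha2pos : 0 < a₂ := mul_pos hCbpos (Real.rpow_pos_of_pos hKpos _)
  have hb2pos : 0 < b₂ := mul_pos hCapos (Real.rpow_pos_of_pos hkpos _)
  refine ⟨min a₁ b₁, max a₁ b₁, min a₂ b₂, max a₂ b₂,
    lt_min ha1pos hb1pos, min_le_max, lt_min ha2pos hb2pos, min_le_max, ?_⟩
  intro t ht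
  rw [hexp1, hexp2]
  have w1 : (0:ℝ) ≤ (t + 1) ^ m⁻¹ := (Real.rpow_pos_of_pos (ht1pos t ht) _).le
  have w2 : (0:ℝ) ≤ (t + 1) ^ (m⁻¹ * (-q)) := (Real.rpow_pos_of_pos (ht1pos t ht) _).le
  refine ⟨le_trans (mul_le_mul_of_nonneg_right (min_le_left _ _) w1) (hDlow t ht),
    le_trans (hDup t ht) (mul_le_mul_of_nonneg_right (le_max_right _ _) w1),
    le_trans (mul_le_mul_of_nonneg_right (min_le_left _ _) w2) (hVlow2 t ht),
    le_trans (hVup2 t ht) (mul_le_mul_of_nonneg_right (le_max_right _ _) w2)⟩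
end

section
/- Let 2 < p < 3, α > 1, λ, C > 0, β* = 1/(p-2), and define D₀* = (αβ*-1)((β*-1)(λC)^{β*}/(αβ*)^{αβ*})^{1/(αβ*-1)}. Then for every D₀ ∈ [0, D₀*) and every V₀ > 0, there exists β ∈ (1, β*) such that D₀ V₀^{(1-β(p-2))/(αβ-1)} ≤ (αβ-1)((β-1)(λC)^β/(αβ)^{αβ})^{1/(αβ-1)}. In other words, the strip [0, D₀*) × (0,∞) is contained in the subcritical region. -/
open Real Filter Set Topology

theorem semi_unconditional_strip
    (p α lam C βs D0s : ℝ)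
    (hp1 : 2 < p) (hp2 : p < 3) (hα : 1 < α)
    (hlam : 0 < lam) (hC : 0 < C)
    (hβs : βs = 1 / (p - 2))
    (hD0s : D0s = (α * βs - 1) *
      (((βs - 1) * (lam * C) ^ βs) / (α * βs) ^ (α * βs)) ^ (1 / (α * βs - 1))) :
    ∀ D0 V0 : ℝ, 0 ≤ D0 → D0 < D0s → 0 < V0 →
      ∃ β : ℝ, 1 < β ∧ β < βs ∧
        D0 * V0 ^ ((1 - β * (p - 2)) / (α * β - 1))
          ≤ (α * β - 1) * (((β - 1) * (lam * C) ^ β) / (α * β) ^ (α * β)) ^ (1 / (α * β - 1)) := by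
  intro D0 V0 hD0 hlt hV0
  have hp2' : 0 < p - 2 := by linarith
  have hp2'' : p - 2 < 1 := by linarith
  have hβs1 : 1 < βs := by rw [hβs]; exact one_lt_one_div hp2' hp2''
  have hαβs : 1 < α * βs := by nlinarith
  have hlc : 0 < lam * C := mul_pos hlam hC
  set F : ℝ → ℝ := fun β => (α * β - 1) *
      (((β - 1) * (lam * C) ^ β) / (α * β) ^ (α * β)) ^ (1 / (α * β - 1)) -
      D0 * V0 ^ ((1 - β * (p - 2)) / (α * β - 1)) with hF
  have hαβs0 : (0:ℝ) < α * βs := by linarith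
  have hbase : 0 < ((βs - 1) * (lam * C) ^ βs) / (α * βs) ^ (α * βs) := by
    apply div_pos
    · exact mul_pos (by linarith) (Real.rpow_pos_of_pos hlc _)
    · exact Real.rpow_pos_of_pos hαβs0 _
  have hcont : ContinuousAt F βs := by
    apply ContinuousAt.sub
    · apply ContinuousAt.mul
      · fun_prop
      · apply ContinuousAt.rpow
        · apply ContinuousAt.div
          · exact ContinuousAt.mul (by fun_prop)
              ((continuousAt_const).rpow continuousAt_id (Or.inl (ne_of_gt hlc)))
          · exact ContinuousAt.rpow (by fun_prop) (by fun_prop) (Or.inl (ne_of_gt hαβs0))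
          · exact ne_of_gt (Real.rpow_pos_of_pos hαβs0 _)
        · exact ContinuousAt.div continuousAt_const (by fun_prop) (ne_of_gt (by linarith : (0:ℝ) < α * βs - 1))
        · exact Or.inl (ne_of_gt hbase)
    · apply ContinuousAt.mul continuousAt_const
      exact ContinuousAt.rpow continuousAt_const
        (ContinuousAt.div (by fun_prop) (by fun_prop) (ne_of_gt (by linarith : (0:ℝ) < α * βs - 1)))
        (Or.inl (ne_of_gt hV0))
  have hexp0 : (1 - βs * (p - 2)) / (α * βs - 1) = 0 := by
    rw [hβs]; field_simp; simp
  have hFβs : 0 < F βs := by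
    simp only [hF]
    rw [hexp0, Real.rpow_zero, mul_one, ← hD0s]
    linarith
  have ht : Tendsto F (𝓝[<] βs) (𝓝 (F βs)) :=
    (hcont.tendsto).mono_left nhdsWithin_le_nhds
  have hev : ∀ᶠ β in 𝓝[<] βs, 0 < F β := ht.eventually (eventually_gt_nhds hFβs)
  have hmem : ∀ᶠ β in 𝓝[<] βs, β ∈ Ioo 1 βs :=
    Ioo_mem_nhdsLT_of_mem ⟨hβs1, le_refl βs⟩
  obtain ⟨β, hβpos, hβIoo⟩ := (hev.and hmem).exists
  refine ⟨β, hβIoo.1, hβIoo.2, ?_⟩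
  simp only [hF] at hβpos
  linarith
end

section
/- Let 2 < p < 3, α > 1, Λ > 0, and suppose D, V : [0,∞) → ℝ>0 satisfy D'(t) = V(t), V'(t) ≥ -Λ D(t)^{-α} V(t)^{p-1} with initial data (x₀, v₀) satisfying v₀ ≥ (αΛ/(α-1))^{β*/(αβ*-1)} (αβ*/(αβ*-1))^{β*} and x₀ ≥ (αβ*-1)^{β*} v₀, where β* = 1/(p-2). Then there exist constants D̲ > 0 and V̲ > 0 such that D(t) ≥ D̲ (t+1) and V(t) ≥ V̲ for all t ≥ 0; in particular there is no alignment. -/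
open Real

set_option maxHeartbeats 1000000 in
theorem no_alignment_supercritical
    (D V : ℝ → ℝ) (p α Lam : ℝ)
    (hp1 : 2 < p) (hp2 : p < 3) (hα : 1 < α) (hLam : 0 < Lam)
    (hDpos : ∀ t, 0 ≤ t → 0 < D t)
    (hVpos : ∀ t, 0 ≤ t → 0 < V t)
    (hDdiff : Differentiable ℝ D)
    (hVdiff : Differentiable ℝ V)
    (hDode : ∀ t, 0 ≤ t → deriv D t = V t)
    (hVode : ∀ t, 0 ≤ t → -Lam * D t ^ (-α) * V t ^ (p - 1) ≤ deriv V t)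
    (hv0 : (α * Lam / (α - 1)) ^ ((1 / (p - 2)) / (α * (1 / (p - 2)) - 1))
        * (α * (1 / (p - 2)) / (α * (1 / (p - 2)) - 1)) ^ (1 / (p - 2)) ≤ V 0)
    (hx0 : (α * (1 / (p - 2)) - 1) ^ (1 / (p - 2)) * V 0 ≤ D 0) :
    ∃ Dlow Vlow : ℝ, 0 < Dlow ∧ 0 < Vlow ∧
      ∀ t, 0 ≤ t → Dlow * (t + 1) ≤ D t ∧ Vlow ≤ V t := by
  have hα1 : (0:ℝ) < α - 1 := by linarith
  set v0 := V 0 with hv0def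
  set x0 := D 0 with hx0def
  have hv0pos : 0 < v0 := hVpos 0 le_rfl
  have hx0pos : 0 < x0 := hDpos 0 le_rfl
  have hεpos : (0:ℝ) < p - 2 := by linarith
  set ε := p - 2 with hεdef
  set β := 1 / ε with hβdef
  have hβ1 : 1 < β := by rw [hβdef, lt_div_iff₀ hεpos]; linarith
  have hβpos : (0:ℝ) < β := by linarith
  have hεβ : ε * β = 1 := by rw [hβdef]; field_simp
  have hεeq : ε = 1 / β := by rw [hβdef]; field_simp
  set a := α * β with hadef
  have ha1 : 1 < a := by rw [hadef]; nlinarith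
  have hapos : (0:ℝ) < a := by linarith
  set A := a - 1 with hAdef
  have hApos : 0 < A := by rw [hAdef]; linarith
  set c := (A / a) ^ β with hcdef
  have hcpos : 0 < c := Real.rpow_pos_of_pos (by positivity) β
  have hc1 : c < 1 := Real.rpow_lt_one (by positivity)
    (by rw [div_lt_one hapos]; linarith) hβpos
  set Vl := c * v0 with hVldef
  have hVlpos : 0 < Vl := by positivity
  have hVlv0 : Vl < v0 := by
    rw [hVldef]; nlinarith
  set K := ε * Lam / ((α - 1) * Vl) with hKdef
  have hKpos : 0 < K := by positivity
  -- key numeric inequality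
  have key : ε * Lam * A ^ (β - A) < (α - 1) * c * v0 ^ (A / β) := by
    have h1 : (α * Lam / (α - 1)) * (a / A) ^ A ≤ v0 ^ (A / β) := by
      have hbase : (0:ℝ) ≤ (α * Lam / (α - 1)) ^ (β / A) * (a / A) ^ β := by positivity
      have h := Real.rpow_le_rpow hbase hv0 (by positivity : (0:ℝ) ≤ A / β)
      calc (α * Lam / (α - 1)) * (a / A) ^ A
          = ((α * Lam / (α - 1)) ^ (β / A) * (a / A) ^ β) ^ (A / β) := by
            rw [Real.mul_rpow (by positivity) (by positivity),
              ← Real.rpow_mul (by positivity), ← Real.rpow_mul (by positivity)]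
            rw [show β / A * (A / β) = 1 by field_simp,
              show β * (A / β) = A by field_simp, Real.rpow_one]
        _ ≤ v0 ^ (A / β) := h
    have h2 : ε * Lam * A ^ (β - A) <
        (α - 1) * c * ((α * Lam / (α - 1)) * (a / A) ^ A) := by
      have hrw : (α - 1) * c * ((α * Lam / (α - 1)) * (a / A) ^ A)
          = α * Lam * (a ^ (A - β) * A ^ (β - A)) := by
        have hc2 : c * (a / A) ^ A = a ^ (A - β) * A ^ (β - A) := by
          rw [hcdef, Real.div_rpow hApos.le hapos.le, Real.div_rpow hapos.le hApos.le]
          rw [div_mul_div_comm, show A ^ β * a ^ A = a ^ A * A ^ β by ring,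
            ← div_mul_div_comm]
          rw [← Real.rpow_sub hapos, ← Real.rpow_sub hApos]
        calc (α - 1) * c * ((α * Lam / (α - 1)) * (a / A) ^ A)
            = (α - 1) * (α * Lam / (α - 1)) * (c * (a / A) ^ A) := by ring
          _ = α * Lam * (a ^ (A - β) * A ^ (β - A)) := by
              rw [hc2, mul_div_cancel₀ _ (ne_of_gt hα1)]
        -- done
      rw [hrw]
      have hfin : ε < α * a ^ (A - β) := by
        have hgt1 : 1 < a ^ (a - β) := by
          rw [Real.one_lt_rpow_iff_of_pos hapos]
          left
          constructor
          · exact ha1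
          · rw [hadef]; nlinarith
        have hsplit : a ^ (a - β) = a * a ^ (A - β) := by
          rw [show a - β = 1 + (A - β) by rw [hAdef]; ring,
            Real.rpow_add hapos, Real.rpow_one]
        rw [hεeq, div_lt_iff₀ hβpos]
        calc (1:ℝ) < a ^ (a - β) := hgt1
          _ = a * a ^ (A - β) := hsplit
          _ = α * a ^ (A - β) * β := by rw [hadef]; ring
      have hpow : (0:ℝ) < A ^ (β - A) := Real.rpow_pos_of_pos hApos _
      calc ε * Lam * A ^ (β - A) < (α * a ^ (A - β)) * Lam * A ^ (β - A) := by
            apply mul_lt_mul_of_pos_right (mul_lt_mul_of_pos_right hfin hLam) hpow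
        _ = α * Lam * (a ^ (A - β) * A ^ (β - A)) := by ring
    calc ε * Lam * A ^ (β - A)
        < (α - 1) * c * ((α * Lam / (α - 1)) * (a / A) ^ A) := h2
      _ ≤ (α - 1) * c * v0 ^ (A / β) := by
          apply mul_le_mul_of_nonneg_left h1 (by positivity)
  -- the main numeric bound
  have hnum : v0 ^ (-ε) + K * x0 ^ (1 - α) < Vl ^ (-ε) := by
    have step1 : x0 ^ (1 - α) ≤ (A ^ β * v0) ^ (1 - α) :=
      Real.rpow_le_rpow_of_nonpos (by positivity) hx0 (by linarith)
    have step2 : (A ^ β * v0) ^ (1 - α) = A ^ (β * (1 - α)) * v0 ^ (1 - α) := by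
      rw [Real.mul_rpow (by positivity) hv0pos.le, ← Real.rpow_mul hApos.le]
    have hVlrw : Vl ^ (-ε) = (a / A) * v0 ^ (-ε) := by
      rw [hVldef, Real.mul_rpow hcpos.le hv0pos.le]
      congr 1
      rw [hcdef, ← Real.rpow_mul (by positivity)]
      rw [show β * (-ε) = -1 by nlinarith [hεβ], Real.rpow_neg_one, inv_div]
    have hv0powpos : (0:ℝ) < v0 ^ (1 - α) := Real.rpow_pos_of_pos hv0pos _
    have k2 : ε * Lam * A ^ (β - A) * v0 ^ (1 - α)
        < (α - 1) * c * v0 ^ (1 - ε) := by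
      have := mul_lt_mul_of_pos_right key hv0powpos
      calc ε * Lam * A ^ (β - A) * v0 ^ (1 - α)
          < (α - 1) * c * v0 ^ (A / β) * v0 ^ (1 - α) := this
        _ = (α - 1) * c * v0 ^ (1 - ε) := by
            have hβne : β ≠ 0 := ne_of_gt hβpos
            have hexp : A / β + (1 - α) = 1 - ε := by
              rw [hAdef, hadef, div_add' _ _ _ hβne, div_eq_iff hβne]
              linear_combination hεβ
            rw [mul_assoc, ← Real.rpow_add hv0pos, hexp]
    have hmid : K * (A ^ (β * (1 - α)) * v0 ^ (1 - α)) < 1 / A * v0 ^ (-ε) := by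
      have hM : (0:ℝ) < (α - 1) * (c * v0) * A := by positivity
      have hAexp : A ^ (β - A) = A ^ (β * (1 - α)) * A := by
        rw [show β - A = β * (1 - α) + 1 by rw [hAdef, hadef]; ring,
          Real.rpow_add hApos, Real.rpow_one]
      have hv0exp : v0 ^ (1 - ε) = v0 ^ (-ε) * v0 := by
        rw [show (1:ℝ) - ε = -ε + 1 by ring, Real.rpow_add hv0pos, Real.rpow_one]
      have e1 : K * (A ^ (β * (1 - α)) * v0 ^ (1 - α))
          = (ε * Lam * A ^ (β - A) * v0 ^ (1 - α)) / ((α - 1) * (c * v0) * A) := by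
        rw [hKdef, hVldef, hAexp]
        field_simp
      have e2 : 1 / A * v0 ^ (-ε)
          = ((α - 1) * c * v0 ^ (1 - ε)) / ((α - 1) * (c * v0) * A) := by
        rw [hv0exp]
        field_simp
      rw [e1, e2, div_lt_div_iff₀ hM hM]
      exact mul_lt_mul_of_pos_right k2 hM
    have haA1 : a / A = 1 + 1 / A := by
      rw [hAdef, one_add_div (by linarith : (0:ℝ) < a - 1).ne', sub_add_cancel]
    rw [hVlrw, haA1]
    have hstep : K * x0 ^ (1 - α) ≤ K * (A ^ (β * (1 - α)) * v0 ^ (1 - α)) := by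
      rw [← step2]
      exact mul_le_mul_of_nonneg_left step1 hKpos.le
    nlinarith [hmid, hstep]
  -- growth of D given lower bound on V on an interval
  have Dgrow : ∀ t0, 0 ≤ t0 → (∀ s ∈ Set.Ioo (0:ℝ) t0, Vl ≤ V s) →
      ∀ s ∈ Set.Icc (0:ℝ) t0, x0 + Vl * s ≤ D s := by
    intro t0 ht0 hVlow s hs
    have hmono : MonotoneOn (fun u => D u - Vl * u) (Set.Icc 0 t0) := by
      apply monotoneOn_of_deriv_nonneg (convex_Icc 0 t0)
      · exact (hDdiff.continuous.sub (continuous_const.mul continuous_id)).continuousOn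
      · exact (hDdiff.sub (differentiable_id.const_mul Vl)).differentiableOn
      · intro x hx
        rw [interior_Icc] at hx
        have hd : HasDerivAt (fun u => D u - Vl * u) (deriv D x - Vl * 1) x :=
          (hDdiff x).hasDerivAt.sub ((hasDerivAt_id x).const_mul Vl)
        rw [hd.deriv, hDode x hx.1.le]
        have := hVlow x hx
        linarith
    have h0 : (0:ℝ) ∈ Set.Icc (0:ℝ) t0 := ⟨le_rfl, ht0⟩
    have := hmono h0 hs hs.1
    simp only [mul_zero, sub_zero] at this
    rw [← hx0def] at this
    linarith
  -- main step : propagate the lower bound on V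
  have Vstep : ∀ t0, 0 ≤ t0 → (∀ s ∈ Set.Ioo (0:ℝ) t0, Vl ≤ V s) → Vl < V t0 := by
    intro t0 ht0 hVlow
    have hDlow := Dgrow t0 ht0 hVlow
    have hxpos : ∀ x ∈ Set.Icc (0:ℝ) t0, 0 < x0 + Vl * x := fun x hx =>
      add_pos_of_pos_of_nonneg hx0pos (mul_nonneg hVlpos.le hx.1)
    -- derivatives
    have hWd : ∀ x ∈ Set.Ioo (0:ℝ) t0,
        HasDerivAt (fun u => V u ^ (-ε)) (deriv V x * (-ε) * V x ^ (-ε - 1)) x := by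
      intro x hx
      exact (hVdiff x).hasDerivAt.rpow_const (Or.inl (hVpos x hx.1.le).ne')
    have hΦd : ∀ x ∈ Set.Ioo (0:ℝ) t0,
        HasDerivAt (fun u => K * (x0 ^ (1 - α) - (x0 + Vl * u) ^ (1 - α)))
          (K * (-(Vl * 1 * (1 - α) * (x0 + Vl * x) ^ (1 - α - 1)))) x := by
      intro x hx
      have hb : HasDerivAt (fun u => x0 + Vl * u) (Vl * 1) x :=
        ((hasDerivAt_id x).const_mul Vl).const_add x0
      have hXpos : 0 < x0 + Vl * x := hxpos x ⟨hx.1.le, hx.2.le⟩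
      have hpow := hb.rpow_const (p := 1 - α) (Or.inl hXpos.ne')
      exact (hpow.const_sub (x0 ^ (1 - α))).const_mul K
    have hG : AntitoneOn
        (fun u => V u ^ (-ε) - K * (x0 ^ (1 - α) - (x0 + Vl * u) ^ (1 - α)))
        (Set.Icc 0 t0) := by
      apply antitoneOn_of_deriv_nonpos (convex_Icc 0 t0)
      · apply ContinuousOn.sub
        · exact ContinuousOn.rpow_const hVdiff.continuous.continuousOn
            (fun x hx => Or.inl (hVpos x hx.1).ne')
        · apply ContinuousOn.mul continuousOn_const
          apply ContinuousOn.sub continuousOn_const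
          exact ContinuousOn.rpow_const
            (continuous_const.add (continuous_const.mul continuous_id)).continuousOn
            (fun x hx => Or.inl (hxpos x hx).ne')
      · intro x hx
        rw [interior_Icc] at hx
        exact ((hWd x hx).sub (hΦd x hx)).differentiableAt.differentiableWithinAt
      · intro x hx
        rw [interior_Icc] at hx
        rw [(show HasDerivAt (fun u => V u ^ (-ε) - K * (x0 ^ (1 - α) - (x0 + Vl * u) ^ (1 - α))) _ x from (hWd x hx).sub (hΦd x hx)).deriv]
        have hVx : 0 < V x := hVpos x hx.1.le
        have hXpos : 0 < x0 + Vl * x := hxpos x ⟨hx.1.le, hx.2.le⟩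
        have hDx : 0 < D x := hDpos x hx.1.le
        -- bound on the W-derivative part
        have hW' : deriv V x * (-ε) * V x ^ (-ε - 1) ≤ ε * Lam * D x ^ (-α) := by
          have hode := hVode x hx.1.le
          have hm : (-ε) * V x ^ (-ε - 1) < 0 := by
            have := Real.rpow_pos_of_pos hVx (-ε - 1)
            nlinarith
          have := mul_le_mul_of_nonpos_right hode (le_of_lt hm)
          calc deriv V x * (-ε) * V x ^ (-ε - 1)
              = deriv V x * ((-ε) * V x ^ (-ε - 1)) := by ring
            _ ≤ (-Lam * D x ^ (-α) * V x ^ (p - 1)) * ((-ε) * V x ^ (-ε - 1)) := this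
            _ = ε * Lam * D x ^ (-α) * (V x ^ (p - 1) * V x ^ (-ε - 1)) := by ring
            _ = ε * Lam * D x ^ (-α) := by
                rw [← Real.rpow_add hVx,
                  show p - 1 + (-ε - 1) = 0 by rw [hεdef]; ring, Real.rpow_zero, mul_one]
        -- the Φ-derivative equals ε Lam (x0+Vl x)^(-α)
        have hΦ' : K * (-(Vl * 1 * (1 - α) * (x0 + Vl * x) ^ (1 - α - 1)))
            = ε * Lam * (x0 + Vl * x) ^ (-α) := by
          rw [show (1:ℝ) - α - 1 = -α by ring, hKdef]
          field_simp
          ring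
        rw [hΦ']
        have hcomp : D x ^ (-α) ≤ (x0 + Vl * x) ^ (-α) := by
          apply Real.rpow_le_rpow_of_nonpos hXpos
            (hDlow x ⟨hx.1.le, hx.2.le⟩) (by linarith)
        have : ε * Lam * D x ^ (-α) ≤ ε * Lam * (x0 + Vl * x) ^ (-α) := by
          apply mul_le_mul_of_nonneg_left hcomp (by positivity)
        linarith
    have hGle := hG (Set.left_mem_Icc.mpr ht0) (Set.right_mem_Icc.mpr ht0) ht0
    simp only [mul_zero, add_zero, sub_self, mul_zero, sub_zero] at hGle
    -- hGle : V t0 ^ (-ε) - K * (x0^(1-α) - (x0+Vl*t0)^(1-α)) ≤ V 0 ^ (-ε)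
    have hpos2 : 0 ≤ K * (x0 + Vl * t0) ^ (1 - α) := by
      have := Real.rpow_pos_of_pos (hxpos t0 (Set.right_mem_Icc.mpr ht0)) (1 - α)
      positivity
    have hWt0 : V t0 ^ (-ε) < Vl ^ (-ε) := by
      have hV0 : V 0 ^ (-ε) = v0 ^ (-ε) := by rw [← hv0def]
      nlinarith [hnum, hGle]
    by_contra hcon
    push_neg at hcon
    have := Real.rpow_le_rpow_of_nonpos (hVpos t0 ht0) hcon (by linarith : -ε ≤ 0)
    linarith
  -- global lower bound on V
  have hVall : ∀ t, 0 ≤ t → Vl ≤ V t := by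
    by_contra hcon
    push_neg at hcon
    obtain ⟨t1, ht1, hVt1⟩ := hcon
    set S := {t : ℝ | 0 ≤ t ∧ V t ≤ Vl} with hSdef
    have hSne : S.Nonempty := ⟨t1, ht1, hVt1.le⟩
    have hSbdd : BddBelow S := ⟨0, fun t ht => ht.1⟩
    have hSclosed : IsClosed S := by
      have hS : S = Set.Ici 0 ∩ V ⁻¹' Set.Iic Vl := by
        ext t
        simp [hSdef, Set.mem_Ici, Set.mem_Iic]
      rw [hS]
      exact isClosed_Ici.inter (isClosed_Iic.preimage hVdiff.continuous)
    have ht0mem : sInf S ∈ S := hSclosed.csInf_mem hSne hSbdd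
    have hmid : ∀ s ∈ Set.Ioo (0:ℝ) (sInf S), Vl ≤ V s := by
      intro s hs
      by_contra h
      push_neg at h
      have hmem : s ∈ S := ⟨hs.1.le, h.le⟩
      have := csInf_le hSbdd hmem
      linarith [hs.2]
    have := Vstep (sInf S) ht0mem.1 hmid
    linarith [ht0mem.2]
  -- conclusion
  refine ⟨min x0 Vl, Vl, lt_min hx0pos hVlpos, hVlpos, ?_⟩
  intro t ht
  refine ⟨?_, hVall t ht⟩
  have hD := Dgrow t ht (fun s hs => hVall s hs.1.le) t ⟨ht, le_rfl⟩
  have h1 : min x0 Vl ≤ x0 := min_le_left _ _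
  have h2 : min x0 Vl ≤ Vl := min_le_right _ _
  nlinarith [mul_le_mul_of_nonneg_right h2 ht]
end

section
/- Let p > 3, α > 1, Λ > 0, and suppose D, V : [0,∞) → ℝ>0 satisfy D'(t) = V(t) and V'(t) ≥ -Λ D(t)^{-α} V(t)^{p-1}. Then for every initial data D(0) = x₀ > 0 and V(0) = v₀ > 0 (no matter how small), there exist constants D̲ > 0 and V̲ > 0 such that D(t) ≥ x₀ + V̲ t and V(t) ≥ V̲ for all t ≥ 0. Hence there is no alignment for any initial data. -/
open Real

theorem eps_exists (v0 C p : ℝ) (hv0 : 0 < v0) (hp : 3 < p) :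
    ∃ ε : ℝ, 0 < ε ∧ ε < v0 ∧ v0 ^ (-(p-2)) + C / ε < ε ^ (-(p-2)) := by
  have h2 : (0:ℝ) < p - 2 := by linarith
  have h3 : (0:ℝ) < p - 3 := by linarith
  have t1 : Filter.Tendsto (fun x : ℝ => x ^ (p-2) * v0 ^ (-(p-2)) + C * x ^ (p-3)) (nhds 0) (nhds 0) := by
    have c1 : ContinuousAt (fun x : ℝ => x ^ (p-2)) 0 := continuousAt_rpow_const 0 (p-2) (Or.inr h2.le)
    have c2 : ContinuousAt (fun x : ℝ => x ^ (p-3)) 0 := continuousAt_rpow_const 0 (p-3) (Or.inr h3.le)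
    have : ContinuousAt (fun x : ℝ => x ^ (p-2) * v0 ^ (-(p-2)) + C * x ^ (p-3)) 0 :=
      (c1.mul continuousAt_const).add (continuousAt_const.mul c2)
    simpa [ContinuousAt, Real.zero_rpow h2.ne', Real.zero_rpow h3.ne'] using this
  have h1 : ∀ᶠ x in nhds (0:ℝ), x ^ (p-2) * v0 ^ (-(p-2)) + C * x ^ (p-3) < 1 :=
    t1 (Iio_mem_nhds (by norm_num))
  have h2' : ∀ᶠ x in nhds (0:ℝ), x < v0 := Iio_mem_nhds hv0
  have hne : (nhdsWithin (0:ℝ) (Set.Ioi 0)).NeBot := nhdsGT_neBot 0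
  obtain ⟨ε, ⟨hf, hεv⟩, hε⟩ :=
    (((h1.and h2').filter_mono nhdsWithin_le_nhds).and (self_mem_nhdsWithin : Set.Ioi (0:ℝ) ∈ nhdsWithin 0 (Set.Ioi 0))).exists
  refine ⟨ε, hε, hεv, ?_⟩
  have hεpos : (0:ℝ) < ε := hε
  have hεneg : 0 < ε ^ (-(p-2)) := Real.rpow_pos_of_pos hεpos _
  have key := mul_lt_mul_of_pos_right hf hεneg
  rw [one_mul] at key
  have e1 : ε ^ (p-2) * ε ^ (-(p-2)) = 1 := by
    rw [← Real.rpow_add hεpos]; simp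
  have e2 : ε ^ (p-3) * ε ^ (-(p-2)) = ε⁻¹ := by
    rw [← Real.rpow_add hεpos, show p-3 + -(p-2) = -1 by ring, Real.rpow_neg_one]
  calc v0 ^ (-(p-2)) + C / ε
      = v0 ^ (-(p-2)) * (ε ^ (p-2) * ε ^ (-(p-2))) + C * (ε ^ (p-3) * ε ^ (-(p-2))) := by
        rw [e1, e2, div_eq_mul_inv]; ring
    _ = (ε ^ (p-2) * v0 ^ (-(p-2)) + C * ε ^ (p-3)) * ε ^ (-(p-2)) := by ring
    _ < ε ^ (-(p-2)) := key

theorem no_alignment_generic_data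
    (D V : ℝ → ℝ) (p α Lam : ℝ)
    (hp : 3 < p) (hα : 1 < α) (hLam : 0 < Lam)
    (hDpos : ∀ t, 0 ≤ t → 0 < D t)
    (hVpos : ∀ t, 0 ≤ t → 0 < V t)
    (hDdiff : Differentiable ℝ D)
    (hVdiff : Differentiable ℝ V)
    (hDode : ∀ t, 0 ≤ t → deriv D t = V t)
    (hVode : ∀ t, 0 ≤ t → -Lam * D t ^ (-α) * V t ^ (p - 1) ≤ deriv V t)
    (hx0 : 0 < D 0) (hv0 : 0 < V 0) :
    ∃ Dlow Vlow : ℝ, 0 < Dlow ∧ 0 < Vlow ∧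
      ∀ t, 0 ≤ t → D 0 + Vlow * t ≤ D t ∧ Vlow ≤ V t := by
  set x0 := D 0 with hx0def
  set v0 := V 0 with hv0def
  have hp2 : (0:ℝ) < p - 2 := by linarith
  have hα1 : (0:ℝ) < α - 1 := by linarith
  set C : ℝ := (p-2) * Lam * x0 ^ (1-α) / (α-1) with hCdef
  obtain ⟨ε, hεpos, hεv, hεkey⟩ := eps_exists v0 C p hv0 hp
  set K : ℝ := (p-2) * Lam / (ε * (α-1)) with hKdef
  have hKpos : 0 < K := by
    apply div_pos (by positivity) (by positivity)
  -- key claim : V stays above ε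
  have claimV : ∀ t, 0 ≤ t → ε < V t := by
    by_contra hcon
    push_neg at hcon
    obtain ⟨t', ht'0, ht'V⟩ := hcon
    set S : Set ℝ := {t | 0 ≤ t ∧ V t ≤ ε} with hSdef
    have hSne : S.Nonempty := ⟨t', ht'0, ht'V⟩
    have hSclosed : IsClosed S := by
      have : S = {t | 0 ≤ t} ∩ {t | V t ≤ ε} := rfl
      rw [this]
      exact (isClosed_le continuous_const continuous_id).inter
        (isClosed_le hVdiff.continuous continuous_const)
    have hSbdd : BddBelow S := ⟨0, fun t ht => ht.1⟩
    set t1 : ℝ := sInf S with ht1def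
    have ht1mem : t1 ∈ S := hSclosed.csInf_mem hSne hSbdd
    have ht1pos : 0 < t1 := by
      rcases lt_or_eq_of_le ht1mem.1 with h | h
      · exact h
      · exfalso; have := ht1mem.2; rw [← h] at this; linarith [hεv, this]
    -- on [0, t1), ε < V t
    have hVabove : ∀ t, 0 ≤ t → t < t1 → ε < V t := by
      intro t ht htlt
      by_contra hle
      push_neg at hle
      exact absurd (csInf_le hSbdd ⟨ht, hle⟩) (not_le.mpr htlt)
    -- D t ≥ x0 + ε t on [0, t1]
    have hDge : ∀ t ∈ Set.Icc (0:ℝ) t1, x0 + ε * t ≤ D t := by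
      have hmono : MonotoneOn (fun t => D t - ε * t) (Set.Icc 0 t1) := by
        apply monotoneOn_of_deriv_nonneg (convex_Icc 0 t1)
        · exact (hDdiff.continuous.sub (continuous_const.mul continuous_id)).continuousOn
        · exact (hDdiff.sub ((differentiable_id.const_mul ε))).differentiableOn
        · intro t ht
          rw [interior_Icc] at ht
          have hdd : HasDerivAt (fun t => D t - ε * t) (deriv D t - ε * 1) t :=
            (hDdiff t).hasDerivAt.sub ((hasDerivAt_id t).const_mul ε)
          rw [hdd.deriv, hDode t ht.1.le]
          have := hVabove t ht.1.le ht.2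
          linarith
      intro t ht
      have := hmono (Set.left_mem_Icc.mpr (le_of_lt ht1pos)) ht ht.1
      simp only [mul_zero, sub_zero] at this
      linarith
    -- the Lyapunov function F is antitone on [0, t1]
    set F : ℝ → ℝ := fun t => V t ^ (-(p-2)) + K * (x0 + ε * t) ^ (1-α) with hFdef
    have hbasepos : ∀ t : ℝ, 0 ≤ t → 0 < x0 + ε * t := by
      intro t ht; positivity
    have hFanti : AntitoneOn F (Set.Icc 0 t1) := by
      apply antitoneOn_of_deriv_nonpos (convex_Icc 0 t1)
      · apply ContinuousOn.add
        · apply ContinuousOn.rpow_const hVdiff.continuous.continuousOn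
          intro t ht; exact Or.inl (hVpos t ht.1).ne'
        · apply ContinuousOn.mul continuousOn_const
          apply ContinuousOn.rpow_const
          · exact (continuous_const.add (continuous_const.mul continuous_id)).continuousOn
          · intro t ht; exact Or.inl (hbasepos t ht.1).ne'
      · intro t ht
        rw [interior_Icc] at ht
        have h1 : HasDerivAt (fun s => V s ^ (-(p-2)))
            (deriv V t * (-(p-2)) * V t ^ (-(p-2)-1)) t :=
          (hVdiff t).hasDerivAt.rpow_const (Or.inl (hVpos t ht.1.le).ne')
        have h2 : HasDerivAt (fun s : ℝ => x0 + ε * s) (ε * 1) t :=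
          ((hasDerivAt_const t x0).add ((hasDerivAt_id t).const_mul ε)).congr_deriv (by ring)
        have h3 : HasDerivAt (fun s => K * (x0 + ε * s) ^ (1-α))
            ((ε * 1 * (1-α) * (x0 + ε * t) ^ (1-α-1)) * K) t :=
          ((h2.rpow_const (Or.inl (hbasepos t ht.1.le).ne')).const_mul K).congr_deriv (by ring)
        exact ((h1.add h3)).differentiableAt.differentiableWithinAt
      · intro t ht
        rw [interior_Icc] at ht
        have htpos : (0:ℝ) ≤ t := ht.1.le
        have h1 : HasDerivAt (fun s => V s ^ (-(p-2)))
            (deriv V t * (-(p-2)) * V t ^ (-(p-2)-1)) t :=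
          (hVdiff t).hasDerivAt.rpow_const (Or.inl (hVpos t htpos).ne')
        have h2 : HasDerivAt (fun s : ℝ => x0 + ε * s) (ε * 1) t :=
          ((hasDerivAt_const t x0).add ((hasDerivAt_id t).const_mul ε)).congr_deriv (by ring)
        have h3 : HasDerivAt (fun s => K * (x0 + ε * s) ^ (1-α))
            (K * (ε * 1 * (1-α) * (x0 + ε * t) ^ (1-α-1))) t :=
          (h2.rpow_const (Or.inl (hbasepos t htpos).ne')).const_mul K
        rw [show F = (fun s => V s ^ (-(p-2))) + (fun s => K * (x0 + ε * s) ^ (1-α)) from rfl, (h1.add h3).deriv]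
        -- bound each piece
        have hVt : 0 < V t := hVpos t htpos
        have hDt : 0 < D t := hDpos t htpos
        have hbase : 0 < x0 + ε * t := hbasepos t htpos
        have hVp : 0 < V t ^ (-(p-2)-1) := Real.rpow_pos_of_pos hVt _
        have hode := hVode t htpos
        -- -(p-2) * deriv V t * V t ^ (-(p-1)) ≤ (p-2) * Lam * D t ^ (-α)
        have step1 : deriv V t * (-(p-2)) * V t ^ (-(p-2)-1)
            ≤ (p-2) * Lam * D t ^ (-α) := by
          have hmul : (Lam * D t ^ (-α) * V t ^ (p-1)) * ((p-2) * V t ^ (-(p-2)-1))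
              = (p-2) * Lam * D t ^ (-α) := by
            have : V t ^ (p-1) * V t ^ (-(p-2)-1) = 1 := by
              rw [← Real.rpow_add hVt, show p-1 + (-(p-2)-1) = 0 by ring, Real.rpow_zero]
            calc (Lam * D t ^ (-α) * V t ^ (p-1)) * ((p-2) * V t ^ (-(p-2)-1))
                = (p-2) * Lam * D t ^ (-α) * (V t ^ (p-1) * V t ^ (-(p-2)-1)) := by ring
              _ = (p-2) * Lam * D t ^ (-α) := by rw [this, mul_one]
          have hfac : 0 ≤ (p-2) * V t ^ (-(p-2)-1) := by positivity
          have : -deriv V t ≤ Lam * D t ^ (-α) * V t ^ (p-1) := by linarith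
          calc deriv V t * (-(p-2)) * V t ^ (-(p-2)-1)
              = (-deriv V t) * ((p-2) * V t ^ (-(p-2)-1)) := by ring
            _ ≤ (Lam * D t ^ (-α) * V t ^ (p-1)) * ((p-2) * V t ^ (-(p-2)-1)) :=
                mul_le_mul_of_nonneg_right this hfac
            _ = (p-2) * Lam * D t ^ (-α) := hmul
        have step2 : D t ^ (-α) ≤ (x0 + ε * t) ^ (-α) :=
          Real.rpow_le_rpow_of_nonpos hbase (hDge t ⟨htpos, ht.2.le⟩) (by linarith)
        have step3 : K * (ε * 1 * (1-α) * (x0 + ε * t) ^ (1-α-1))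
            = -((p-2) * Lam * (x0 + ε * t) ^ (-α)) := by
          rw [show (1:ℝ)-α-1 = -α by ring, hKdef]
          field_simp
          ring
        rw [step3]
        have : (p-2) * Lam * D t ^ (-α) ≤ (p-2) * Lam * (x0 + ε * t) ^ (-α) := by
          apply mul_le_mul_of_nonneg_left step2 (by positivity)
        linarith [step1]
    -- evaluate: F t1 ≤ F 0
    have hF10 : F t1 ≤ F 0 :=
      hFanti (Set.left_mem_Icc.mpr ht1pos.le) (Set.right_mem_Icc.mpr ht1pos.le) ht1pos.le
    have hF0 : F 0 = v0 ^ (-(p-2)) + C / ε := by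
      simp only [hFdef, mul_zero, add_zero]
      congr 1
      rw [hKdef, hCdef]
      field_simp
    have hVt1 : 0 < V t1 := hVpos t1 ht1mem.1
    have hterm : 0 ≤ K * (x0 + ε * t1) ^ (1-α) := by
      have := hbasepos t1 ht1mem.1
      positivity
    have hVF : V t1 ^ (-(p-2)) ≤ F t1 := by
      simp only [hFdef]; linarith
    have : V t1 ^ (-(p-2)) < ε ^ (-(p-2)) := by
      rw [hF0] at hF10; linarith
    have := (Real.rpow_lt_rpow_iff_of_neg hVt1 hεpos (by linarith)).mp this
    linarith [ht1mem.2]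
  -- final conclusion
  refine ⟨1, ε, one_pos, hεpos, fun t ht => ⟨?_, (claimV t ht).le⟩⟩
  have hmono : MonotoneOn (fun t => D t - ε * t) (Set.Ici 0) := by
    apply monotoneOn_of_deriv_nonneg (convex_Ici 0)
    · exact (hDdiff.continuous.sub (continuous_const.mul continuous_id)).continuousOn
    · exact (hDdiff.sub ((differentiable_id.const_mul ε))).differentiableOn
    · intro s hs
      rw [interior_Ici] at hs
      have hdd : HasDerivAt (fun t => D t - ε * t) (deriv D s - ε * 1) s :=
        (hDdiff s).hasDerivAt.sub ((hasDerivAt_id s).const_mul ε)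
      rw [hdd.deriv, hDode s (le_of_lt hs)]
      linarith [claimV s (le_of_lt hs)]
  have := hmono Set.self_mem_Ici (Set.mem_Ici.mpr ht) ht
  simp only [mul_zero, sub_zero] at this
  linarith
end
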